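/- arXiv:2512.08177 — 3 statements merged into one kernel-verified Lean document; each statement's English description precedes it below -/
import Mathlib

section
/- Suppose the Baron–Myerson-with-quantity-floor schedule q* violates some robustness constraint, i.e., W̲(θ, q*) < G* for some θ ∈ Θ (equivalently, q* does not solve (ROPT)). Then θ^m < θ̄ and θ^m < θ*. -/
open MeasureTheory Set

noncomputable section

/-- The base environment: type space `Θ = [θl, θu]`, capacity `qbar`, lowest inverse
demand `Pl = P̲` (decreasing and continuous on `[0, qbar]` with `Pl 0 > θu`) and the
induced lowest demand `Dl = D̲`, with `Dl θl < qbar`. -/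
structure Env where
  θl : ℝ
  θu : ℝ
  qbar : ℝ
  Pl : ℝ → ℝ
  Dl : ℝ → ℝ
  θl_pos : 0 < θl
  θlu : θl < θu
  qbar_pos : 0 < qbar
  Pl_anti : StrictAntiOn Pl (Icc 0 qbar)
  Pl_cont : ContinuousOn Pl (Icc 0 qbar)
  Pl0 : θu < Pl 0
  Dl_inv : ∀ p, Pl qbar ≤ p → p ≤ Pl 0 → Dl p ∈ Icc (0:ℝ) qbar ∧ Pl (Dl p) = p
  Dl_high : ∀ p, Pl 0 < p → Dl p = 0
  Dl_low : ∀ p, p < Pl qbar → Dl p = qbar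
  Dl_lt : Dl θl < qbar

namespace Env

/-- The type space `Θ = [θl, θu]`. -/
def Θ (E : Env) : Set ℝ := Icc E.θl E.θu

/-- The lowest gross value function `V̲ (x) = ∫_0^x P̲`. -/
def Vl (E : Env) (x : ℝ) : ℝ := ∫ s in (0:ℝ)..x, E.Pl s

/-- `q_ℓ = D̲(θu)`: the efficient quantity at the lowest demand and highest cost. -/
def ql (E : Env) : ℝ := E.Dl E.θu

/-- `G* = V̲(q_ℓ) − θu · q_ℓ`: the maximal attainable guarantee. -/
def Gstar (E : Env) : ℝ := E.Vl E.ql - E.θu * E.ql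

/-- A feasible quantity schedule: weakly decreasing on `Θ`, valued in `[0, qbar]`. -/
def IsSchedule (E : Env) (q : ℝ → ℝ) : Prop :=
  AntitoneOn q E.Θ ∧ ∀ θ ∈ E.Θ, q θ ∈ Icc (0:ℝ) E.qbar

/-- `W̲(θ, q) = V̲(q(θ)) − θ q(θ) − ∫_θ^{θu} q`: ex-post welfare at the lowest demand
with zero rent for the highest type. -/
def Wl (E : Env) (q : ℝ → ℝ) (θ : ℝ) : ℝ :=
  E.Vl (q θ) - θ * q θ - ∫ y in θ..E.θu, q y

/-- An IC and IR (direct) quantity mechanism `(q, u)`. -/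
def IsMech (E : Env) (q u : ℝ → ℝ) : Prop :=
  E.IsSchedule q ∧ 0 ≤ u E.θu ∧
    ∀ θ ∈ E.Θ, u θ = u E.θu + ∫ y in θ..E.θu, q y

/-- The set `𝒱` of admissible gross value functions: integrals of decreasing continuous
inverse demands dominating `P̲` pointwise. -/
def IsValue (E : Env) (V : ℝ → ℝ) : Prop :=
  ∃ P : ℝ → ℝ, StrictAntiOn P (Icc 0 E.qbar) ∧ ContinuousOn P (Icc 0 E.qbar) ∧
    (∀ s ∈ Icc (0:ℝ) E.qbar, E.Pl s ≤ P s) ∧ ∀ x, V x = ∫ s in (0:ℝ)..x, P s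

/-- A Borel probability measure supported in `Θ` (the measure of a cdf `F ∈ 𝒻`). -/
def IsTech (E : Env) (μ : Measure ℝ) : Prop :=
  IsProbabilityMeasure μ ∧ μ (E.Θᶜ) = 0

/-- Ex-ante welfare `W(M; V, F)` of the mechanism `(q, u)` under value `V` and
cost technology `μ`. -/
def W (E : Env) (q u V : ℝ → ℝ) (μ : Measure ℝ) : ℝ :=
  ∫ θ, (V (q θ) - θ * q θ - u θ) ∂μ

/-- The welfare guarantee `G(M) = inf_{V ∈ 𝒱, F ∈ 𝒻} W(M; V, F)`. -/
def G (E : Env) (q u : ℝ → ℝ) : ℝ :=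
  sInf {w : ℝ | ∃ (V : ℝ → ℝ) (μ : Measure ℝ),
    E.IsValue V ∧ E.IsTech μ ∧ w = E.W q u V μ}

/-- The short list: IC and IR mechanisms with the highest guarantee. -/
def ShortList (E : Env) (q u : ℝ → ℝ) : Prop :=
  E.IsMech q u ∧ ∀ q' u' : ℝ → ℝ, E.IsMech q' u' → E.G q' u' ≤ E.G q u

/-- Feasibility in the program (ROPT): a schedule satisfying all robustness
constraints `W̲(θ, q) ≥ G*`. -/
def FeasibleROPT (E : Env) (q : ℝ → ℝ) : Prop :=
  E.IsSchedule q ∧ ∀ θ ∈ E.Θ, E.Gstar ≤ E.Wl q θ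

end Env

/-- A demand `D ∈ 𝒟`, bundled with the inverse demand `P` that induces it:
`P` decreasing and continuous on `[0, qbar]`, `P ≥ P̲` pointwise, `P 0 > θu`. -/
structure Demand (E : Env) where
  P : ℝ → ℝ
  D : ℝ → ℝ
  P_anti : StrictAntiOn P (Icc 0 E.qbar)
  P_cont : ContinuousOn P (Icc 0 E.qbar)
  P_ge : ∀ s ∈ Icc (0:ℝ) E.qbar, E.Pl s ≤ P s
  P0 : E.θu < P 0
  D_inv : ∀ p, P E.qbar ≤ p → p ≤ P 0 → D p ∈ Icc (0:ℝ) E.qbar ∧ P (D p) = p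
  D_high : ∀ p, P 0 < p → D p = 0
  D_low : ∀ p, p < P E.qbar → D p = E.qbar
  D_lt : D E.θl < E.qbar

namespace Demand

/-- The gross value function `V_D(x) = ∫_0^x P` induced by a demand `D ∈ 𝒟`. -/
def V {E : Env} (D : Demand E) (x : ℝ) : ℝ := ∫ s in (0:ℝ)..x, D.P s

end Demand

namespace Env

/-- The lowest demand `D̲` as an element of `𝒟`. -/
def DlDemand (E : Env) : Demand E where
  P := E.Pl
  D := E.Dl
  P_anti := E.Pl_anti
  P_cont := E.Pl_cont
  P_ge := fun _ _ => le_refl _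
  P0 := E.Pl0
  D_inv := E.Dl_inv
  D_high := E.Dl_high
  D_low := E.Dl_low
  D_lt := E.Dl_lt

/-- A price regulation `(p, t)`: nonnegative prices and transfers. -/
def IsPriceReg (E : Env) (p : ℝ → ℝ) (t : ℝ → Demand E → ℝ) : Prop :=
  (∀ θ ∈ E.Θ, 0 ≤ p θ) ∧ ∀ θ ∈ E.Θ, ∀ D : Demand E, 0 ≤ t θ D

/-- The rent `ũ(θ, D) = t(θ, D) − θ · D(p(θ))` of the monopolist. -/
def rent (E : Env) (p : ℝ → ℝ) (t : ℝ → Demand E → ℝ) (θ : ℝ) (D : Demand E) : ℝ :=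
  t θ D - θ * D.D (p θ)

/-- Ex-post incentive compatibility of a price regulation. -/
def EPIC (E : Env) (p : ℝ → ℝ) (t : ℝ → Demand E → ℝ) : Prop :=
  ∀ θ ∈ E.Θ, ∀ θ' ∈ E.Θ, ∀ D : Demand E,
    t θ' D - θ * D.D (p θ') ≤ E.rent p t θ D

/-- Ex-post individual rationality of a price regulation. -/
def EPIR (E : Env) (p : ℝ → ℝ) (t : ℝ → Demand E → ℝ) : Prop :=
  ∀ θ ∈ E.Θ, ∀ D : Demand E, 0 ≤ E.rent p t θ D

/-- Ex-post welfare `w̃(θ; D) = V_D(D(p(θ))) − θ·D(p(θ)) − ũ(θ, D)`. -/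
def wt (E : Env) (p : ℝ → ℝ) (t : ℝ → Demand E → ℝ) (θ : ℝ) (D : Demand E) : ℝ :=
  D.V (D.D (p θ)) - θ * D.D (p θ) - E.rent p t θ D

/-- Ex-ante welfare `W̃((p,t); D, F)` of a price regulation. -/
def Wt (E : Env) (p : ℝ → ℝ) (t : ℝ → Demand E → ℝ) (D : Demand E) (μ : Measure ℝ) : ℝ :=
  ∫ θ, E.wt p t θ D ∂μ

/-- The welfare guarantee `G̃((p,t)) = inf_{D ∈ 𝒟, F ∈ 𝒻} W̃((p,t); D, F)`. -/
def Gt (E : Env) (p : ℝ → ℝ) (t : ℝ → Demand E → ℝ) : ℝ :=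
  sInf {w : ℝ | ∃ (D : Demand E) (μ : Measure ℝ), E.IsTech μ ∧ w = E.Wt p t D μ}

/-- An EPIC and EPIR price regulation. -/
def IsAdmissiblePR (E : Env) (p : ℝ → ℝ) (t : ℝ → Demand E → ℝ) : Prop :=
  E.IsPriceReg p t ∧ E.EPIC p t ∧ E.EPIR p t

/-- The price short list: EPIC and EPIR price regulations with the highest guarantee. -/
def PriceShortList (E : Env) (p : ℝ → ℝ) (t : ℝ → Demand E → ℝ) : Prop :=
  E.IsAdmissiblePR p t ∧
    ∀ (p' : ℝ → ℝ) (t' : ℝ → Demand E → ℝ), E.IsAdmissiblePR p' t' → E.Gt p' t' ≤ E.Gt p t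

end Env

/-- The conjectured model: a regular cdf `F*` with density `f*` on `Θ`, and a
conjectured inverse demand `P*` (with induced demand `D*`) dominating `P̲`. -/
structure Model (E : Env) where
  Fstar : ℝ → ℝ
  fstar : ℝ → ℝ
  Pstar : ℝ → ℝ
  Dstar : ℝ → ℝ
  fstar_pos : ∀ θ ∈ E.Θ, 0 < fstar θ
  Fstar_ac : ∀ θ ∈ E.Θ, Fstar θ = ∫ y in E.θl..θ, fstar y
  Fstar_l : Fstar E.θl = 0
  Fstar_u : Fstar E.θu = 1
  zstar_cont : ContinuousOn (fun θ => θ + Fstar θ / fstar θ) E.Θ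
  zstar_mono : StrictMonoOn (fun θ => θ + Fstar θ / fstar θ) E.Θ
  Pstar_anti : StrictAntiOn Pstar (Icc 0 E.qbar)
  Pstar_cont : ContinuousOn Pstar (Icc 0 E.qbar)
  Pstar_ge : ∀ s ∈ Icc (0:ℝ) E.qbar, E.Pl s ≤ Pstar s
  Pstar0 : E.θu < Pstar 0
  Dstar_inv : ∀ p, Pstar E.qbar ≤ p → p ≤ Pstar 0 →
    Dstar p ∈ Icc (0:ℝ) E.qbar ∧ Pstar (Dstar p) = p
  Dstar_high : ∀ p, Pstar 0 < p → Dstar p = 0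
  Dstar_low : ∀ p, p < Pstar E.qbar → Dstar p = E.qbar
  Dstar_lt : Dstar E.θl < E.qbar

namespace Model

variable {E : Env} (Mo : Model E)

/-- The virtual cost `z*(θ) = θ + F*(θ)/f*(θ)`. -/
def zstar (θ : ℝ) : ℝ := θ + Mo.Fstar θ / Mo.fstar θ

/-- The conjectured gross value function `V*(x) = ∫_0^x P*`. -/
def Vstar (x : ℝ) : ℝ := ∫ s in (0:ℝ)..x, Mo.Pstar s

/-- The Baron–Myerson schedule `q^BM(θ) = D*(z*(θ))`. -/
def qBM (θ : ℝ) : ℝ := Mo.Dstar (Mo.zstar θ)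

/-- The Baron–Myerson-with-quantity-floor schedule `q*(θ) = max{q^BM(θ), q_ℓ}`. -/
def qstar (θ : ℝ) : ℝ := max (Mo.qBM θ) E.ql

/-- The objective of (ROPT): expected virtual surplus under the conjectured model. -/
def J (q : ℝ → ℝ) : ℝ :=
  ∫ θ in E.θl..E.θu, (Mo.Vstar (q θ) - Mo.zstar θ * q θ) * Mo.fstar θ

/-- `q` solves the program (ROPT). -/
def SolvesROPT (q : ℝ → ℝ) : Prop :=
  E.FeasibleROPT q ∧ ∀ q' : ℝ → ℝ, E.FeasibleROPT q' → Mo.J q' ≤ Mo.J q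

/-- `θ*`: the unique solution of `q^BM(θ*) = q_ℓ` in `Θ` when `q^BM(θu) < q_ℓ`;
otherwise `θ* = θu`. -/
def IsThetaStar (θs : ℝ) : Prop :=
  (Mo.qBM E.θu < E.ql ∧ θs ∈ E.Θ ∧ Mo.qBM θs = E.ql) ∨
    (E.ql ≤ Mo.qBM E.θu ∧ θs = E.θu)

/-- `θ^m`: the largest minimizer of `W̲(·, q*)` over `Θ`. -/
def IsThetaM (θm : ℝ) : Prop :=
  θm ∈ E.Θ ∧ (∀ θ' ∈ E.Θ, E.Wl Mo.qstar θm ≤ E.Wl Mo.qstar θ') ∧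
    ∀ θ ∈ E.Θ, (∀ θ' ∈ E.Θ, E.Wl Mo.qstar θ ≤ E.Wl Mo.qstar θ') → θ ≤ θm

/-- The conjectured demand `D*` as an element of `𝒟`. -/
def DstarDemand : Demand E where
  P := Mo.Pstar
  D := Mo.Dstar
  P_anti := Mo.Pstar_anti
  P_cont := Mo.Pstar_cont
  P_ge := Mo.Pstar_ge
  P0 := Mo.Pstar0
  D_inv := Mo.Dstar_inv
  D_high := Mo.Dstar_high
  D_low := Mo.Dstar_low
  D_lt := Mo.Dstar_lt

/-- Expected welfare `W((q,u); V*, F*)` of a quantity mechanism under the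
conjectured model. -/
def WStar (q u : ℝ → ℝ) : ℝ :=
  ∫ θ in E.θl..E.θu, (Mo.Vstar (q θ) - θ * q θ - u θ) * Mo.fstar θ

/-- Expected welfare `W̃((p,t); D*, F*)` of a price regulation under the
conjectured model. -/
def WtStar (p : ℝ → ℝ) (t : ℝ → Demand E → ℝ) : ℝ :=
  ∫ θ in E.θl..E.θu, E.wt p t θ Mo.DstarDemand * Mo.fstar θ

/-- A robustly optimal price regulation: in the price short list, and maximizing
expected welfare under the conjectured model over the price short list. -/
def RobustlyOptimalPR (p : ℝ → ℝ) (t : ℝ → Demand E → ℝ) : Prop :=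
  E.PriceShortList p t ∧
    ∀ (p' : ℝ → ℝ) (t' : ℝ → Demand E → ℝ), E.PriceShortList p' t' →
      Mo.WtStar p' t' ≤ Mo.WtStar p t

/-- A Baron–Myerson-with-price-cap regulation. -/
def IsBMPriceCap (p : ℝ → ℝ) (t : ℝ → Demand E → ℝ) : Prop :=
  E.IsAdmissiblePR p t ∧
  (∀ θ ∈ E.Θ, p θ = min (Mo.zstar θ) E.θu) ∧
  (∀ θ ∈ E.Θ, ∀ D : Demand E,
    E.rent p t θ D = E.rent p t E.θu D + ∫ y in θ..E.θu, D.D (p y)) ∧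
  (∀ D : Demand E, D ≠ E.DlDemand → D ≠ Mo.DstarDemand →
    0 ≤ E.rent p t E.θu D ∧
      E.rent p t E.θu D ≤ D.V (D.D E.θu) - E.θu * D.D E.θu - E.Gstar) ∧
  E.rent p t E.θu E.DlDemand = 0 ∧ E.rent p t E.θu Mo.DstarDemand = 0

end Model

/-!
On `[θ, θu]` the floor binds as soon as `q^BM(θ) ≤ q_ℓ`, and then `W̲(θ, q*) = V̲(q_ℓ) − θ q_ℓ −
(θu − θ) q_ℓ = G*`. Since some constraint is violated, `W̲(θ^m, q*) < G*`, so `θ^m` lies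
strictly below every such `θ`, in particular below `θ*`. If instead `q^BM(θu) > q_ℓ`, then `P̲(q*(θu)) < θu`,
and for `θ` just below `θu` concavity of `V̲` and monotonicity of `q*` give
`W̲(θ, q*) − W̲(θu, q*) ≤ −(θ − P̲(q*(θu)))(q*(θ) − q*(θu)) < 0`, so `θu` is not a minimizer.
-/

section IntervalIntegralBounds

variable {f : ℝ → ℝ} {a b : ℝ}

theorem AntitoneOn.mul_le_intervalIntegral (hab : a ≤ b) (hf : AntitoneOn f (Icc a b)) :
    (b - a) * f b ≤ ∫ x in a..b, f x := by
  have hfi : IntervalIntegrable f volume a b := by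
    rw [← uIcc_of_le hab] at hf
    exact hf.intervalIntegrable
  have h := intervalIntegral.integral_mono_on hab intervalIntegrable_const hfi
    fun x hx => hf hx (right_mem_Icc.2 hab) hx.2
  rwa [intervalIntegral.integral_const, smul_eq_mul] at h

theorem AntitoneOn.intervalIntegral_le_mul (hab : a ≤ b) (hf : AntitoneOn f (Icc a b)) :
    ∫ x in a..b, f x ≤ (b - a) * f a := by
  have hfi : IntervalIntegrable f volume a b := by
    rw [← uIcc_of_le hab] at hf
    exact hf.intervalIntegrable
  have h := intervalIntegral.integral_mono_on hab hfi intervalIntegrable_const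
    fun x hx => hf (left_mem_Icc.2 hab) hx hx.1
  rwa [intervalIntegral.integral_const, smul_eq_mul] at h

end IntervalIntegralBounds

namespace Demand

variable {E : Env} (D : Demand E)

theorem P_qbar_le_θl : D.P E.qbar ≤ E.θl := by
  by_contra! h
  exact (D.D_low E.θl h ▸ D.D_lt).false

theorem D_mem (p : ℝ) : D.D p ∈ Icc (0:ℝ) E.qbar := by
  by_cases hlow : p < D.P E.qbar
  · rw [D.D_low p hlow]
    exact right_mem_Icc.2 E.qbar_pos.le
  by_cases hhigh : D.P 0 < p
  · rw [D.D_high p hhigh]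
    exact left_mem_Icc.2 E.qbar_pos.le
  exact (D.D_inv p (not_lt.1 hlow) (not_lt.1 hhigh)).1

theorem D_antitone : Antitone D.D := by
  intro p1 p2 h
  by_cases hlow : p1 < D.P E.qbar
  · rw [D.D_low p1 hlow]
    exact (D.D_mem p2).2
  by_cases hhigh : D.P 0 < p2
  · rw [D.D_high p2 hhigh]
    exact (D.D_mem p1).1
  rw [not_lt] at hlow hhigh
  obtain ⟨hmem1, hP1⟩ := D.D_inv p1 hlow (h.trans hhigh)
  obtain ⟨hmem2, hP2⟩ := D.D_inv p2 (hlow.trans h) hhigh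
  by_contra! hlt
  have := D.P_anti hmem1 hmem2 hlt
  linarith

theorem D_lt_D {p1 p2 : ℝ} (hlow : D.P E.qbar ≤ p1) (h : p1 < p2) (hpos : 0 < D.D p2) :
    D.D p2 < D.D p1 := by
  have hhigh : p2 ≤ D.P 0 := by
    by_contra! hhigh
    exact (D.D_high p2 hhigh ▸ hpos).false
  have hP1 := (D.D_inv p1 hlow (h.le.trans hhigh)).2
  have hP2 := (D.D_inv p2 (hlow.trans h.le) hhigh).2
  refine (D.D_antitone h.le).lt_of_ne fun heq => h.ne ?_
  rw [← hP1, ← hP2, heq]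

end Demand

namespace Env

variable (E : Env)

theorem Pl_qbar_le_θl : E.Pl E.qbar ≤ E.θl := E.DlDemand.P_qbar_le_θl

theorem ql_mem : E.ql ∈ Icc (0:ℝ) E.qbar :=
  (E.Dl_inv E.θu (E.Pl_qbar_le_θl.trans E.θlu.le) E.Pl0.le).1

theorem Pl_ql : E.Pl E.ql = E.θu :=
  (E.Dl_inv E.θu (E.Pl_qbar_le_θl.trans E.θlu.le) E.Pl0.le).2

theorem Vl_sub_Vl {x y : ℝ} (hx : x ∈ Icc (0:ℝ) E.qbar) (hy : y ∈ Icc (0:ℝ) E.qbar) :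
    E.Vl y - E.Vl x = ∫ s in x..y, E.Pl s := by
  have hint : ∀ z ∈ Icc (0:ℝ) E.qbar, IntervalIntegrable E.Pl volume 0 z := fun z hz =>
    (E.Pl_cont.mono (uIcc_subset_Icc (left_mem_Icc.2 E.qbar_pos.le) hz)).intervalIntegrable
  exact intervalIntegral.integral_interval_sub_left (hint y hy) (hint x hx)

variable {E}

theorem Wl_eq_Gstar_of_eqOn {q : ℝ → ℝ} {θ : ℝ} (hθ : θ ≤ E.θu)
    (hflat : EqOn q (fun _ => E.ql) (Icc θ E.θu)) : E.Wl q θ = E.Gstar := by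
  have hint : ∫ y in θ..E.θu, q y = ∫ _ in θ..E.θu, E.ql :=
    intervalIntegral.integral_congr (by rwa [uIcc_of_le hθ])
  rw [Wl, Gstar, hflat (left_mem_Icc.2 hθ), hint, intervalIntegral.integral_const, smul_eq_mul]
  ring

theorem Wl_lt_Wl_θu {q : ℝ → ℝ} (hq : E.IsSchedule q) {θ : ℝ} (hθ : θ ∈ E.Θ)
    (hθu : θ < E.θu) (hjump : q E.θu < q θ) (hprice : E.Pl (q E.θu) < θ) :
    E.Wl q θ < E.Wl q E.θu := by
  have hθuΘ : E.θu ∈ E.Θ := right_mem_Icc.2 E.θlu.le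
  have hVl : E.Vl (q θ) - E.Vl (q E.θu) ≤ (q θ - q E.θu) * E.Pl (q E.θu) := by
    rw [E.Vl_sub_Vl (hq.2 _ hθuΘ) (hq.2 _ hθ)]
    exact (E.Pl_anti.antitoneOn.mono (Icc_subset_Icc (hq.2 _ hθuΘ).1 (hq.2 _ hθ).2))
      |>.intervalIntegral_le_mul hjump.le
  have hrent : (E.θu - θ) * q E.θu ≤ ∫ y in θ..E.θu, q y :=
    (hq.1.mono (Icc_subset_Icc hθ.1 le_rfl)).mul_le_intervalIntegral hθu.le
  have hgain := mul_pos (sub_pos.2 hprice) (sub_pos.2 hjump)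
  simp only [Wl, intervalIntegral.integral_same]
  linarith

end Env

namespace Model

variable {E : Env} (Mo : Model E)

theorem le_zstar {θ : ℝ} (hθ : θ ∈ E.Θ) : θ ≤ Mo.zstar θ := by
  have hF : 0 ≤ Mo.Fstar θ := by
    rw [Mo.Fstar_ac θ hθ]
    exact intervalIntegral.integral_nonneg hθ.1
      fun y hy => (Mo.fstar_pos y ⟨hy.1, hy.2.trans hθ.2⟩).le
  have := div_nonneg hF (Mo.fstar_pos θ hθ).le
  rw [zstar]
  linarith

theorem qBM_antitoneOn : AntitoneOn Mo.qBM E.Θ := fun _ h1 _ h2 h =>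
  Mo.DstarDemand.D_antitone (Mo.zstar_mono.monotoneOn h1 h2 h)

theorem qBM_lt_qBM {θ1 θ2 : ℝ} (h1 : θ1 ∈ E.Θ) (h2 : θ2 ∈ E.Θ) (h : θ1 < θ2)
    (hpos : 0 < Mo.qBM θ2) : Mo.qBM θ2 < Mo.qBM θ1 :=
  Mo.DstarDemand.D_lt_D (Mo.DstarDemand.P_qbar_le_θl.trans (h1.1.trans (Mo.le_zstar h1)))
    (Mo.zstar_mono h1 h2 h) hpos

theorem isSchedule_qstar : E.IsSchedule Mo.qstar :=
  ⟨fun _ h1 _ h2 h => max_le_max (Mo.qBM_antitoneOn h1 h2 h) le_rfl, fun _ _ =>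
    ⟨E.ql_mem.1.trans (le_max_right _ _), max_le (Mo.DstarDemand.D_mem _).2 E.ql_mem.2⟩⟩

theorem Wl_qstar_eq_Gstar {θ : ℝ} (hθ : θ ∈ E.Θ) (hle : Mo.qBM θ ≤ E.ql) :
    E.Wl Mo.qstar θ = E.Gstar :=
  E.Wl_eq_Gstar_of_eqOn hθ.2 fun _ hy =>
    max_eq_right ((Mo.qBM_antitoneOn hθ ⟨hθ.1.trans hy.1, hy.2⟩ hy.1).trans hle)

theorem exists_Wl_qstar_lt_Wl_qstar_θu (hlt : E.ql < Mo.qBM E.θu) :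
    ∃ θ ∈ E.Θ, E.Wl Mo.qstar θ < E.Wl Mo.qstar E.θu := by
  have hθuΘ : E.θu ∈ E.Θ := right_mem_Icc.2 E.θlu.le
  have hqstar : Mo.qstar E.θu = Mo.qBM E.θu := max_eq_left hlt.le
  have hprice : E.Pl (Mo.qBM E.θu) < E.θu := by
    have := E.Pl_anti E.ql_mem (Mo.DstarDemand.D_mem _) hlt
    rwa [E.Pl_ql] at this
  obtain ⟨θ, hθ_gt, hθu⟩ := exists_between (max_lt hprice E.θlu)
  have hθ : θ ∈ E.Θ := ⟨(le_max_right _ _).trans hθ_gt.le, hθu.le⟩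
  have hjump : Mo.qBM E.θu < Mo.qBM θ :=
    Mo.qBM_lt_qBM hθ hθuΘ hθu (E.ql_mem.1.trans_lt hlt)
  refine ⟨θ, hθ, E.Wl_lt_Wl_θu Mo.isSchedule_qstar hθ hθu ?_ ?_⟩
  · rw [hqstar]
    exact hjump.trans_le (le_max_left _ _)
  · rw [hqstar]
    exact (le_max_left _ _).trans_lt hθ_gt

variable {Mo}

theorem IsThetaM.lt_of_qBM_le_ql {θm θ : ℝ} (hθm : Mo.IsThetaM θm)
    (hviol : ∃ θ ∈ E.Θ, E.Wl Mo.qstar θ < E.Gstar) (hθ : θ ∈ E.Θ) (hle : Mo.qBM θ ≤ E.ql) :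
    θm < θ := by
  obtain ⟨θ0, hθ0, hviol⟩ := hviol
  by_contra! hθθm
  have := Mo.Wl_qstar_eq_Gstar ⟨hθ.1.trans hθθm, hθm.1.2⟩
    ((Mo.qBM_antitoneOn hθ hθm.1 hθθm).trans hle)
  linarith [hθm.2.1 θ0 hθ0]

theorem IsThetaM.lt_θu_of_ql_lt_qBM {θm : ℝ} (hθm : Mo.IsThetaM θm)
    (hlt : E.ql < Mo.qBM E.θu) : θm < E.θu := by
  obtain ⟨θ, hθ, hWl⟩ := Mo.exists_Wl_qstar_lt_Wl_qstar_θu hlt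
  refine hθm.1.2.lt_of_ne ?_
  rintro rfl
  exact (hθm.2.1 θ hθ).not_gt hWl

end Model

/-- Lemma (θ^m and θ*): if the Baron–Myerson-with-quantity-floor schedule violates a
robustness constraint, then `θ^m < θu` and `θ^m < θ*`. -/
theorem thetaM_lt_thetaStar (E : Env) (Mo : Model E)
    (hviol : ∃ θ ∈ E.Θ, E.Wl Mo.qstar θ < E.Gstar)
    (θs θm : ℝ) (hθs : Mo.IsThetaStar θs) (hθm : Mo.IsThetaM θm) :
    θm < E.θu ∧ θm < θs := by
  rcases lt_or_ge E.ql (Mo.qBM E.θu) with hlt | hle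
  · have hθs_eq : θs = E.θu := by
      rcases hθs with ⟨hlt', -⟩ | ⟨-, rfl⟩
      · exact absurd hlt hlt'.asymm
      · rfl
    have hθm_lt := hθm.lt_θu_of_ql_lt_qBM hlt
    exact ⟨hθm_lt, hθs_eq ▸ hθm_lt⟩
  · obtain ⟨hθsΘ, hθs_le⟩ : θs ∈ E.Θ ∧ Mo.qBM θs ≤ E.ql := by
      rcases hθs with ⟨-, hθsΘ, heq⟩ | ⟨-, rfl⟩
      · exact ⟨hθsΘ, heq.le⟩
      · exact ⟨right_mem_Icc.2 E.θlu.le, hle⟩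
    have hθm_lt := hθm.lt_of_qBM_le_ql hviol hθsΘ hθs_le
    exact ⟨hθm_lt.trans_le hθsΘ.2, hθm_lt⟩
end
end

section
/- Suppose W̲(θ, q*) < G* for some θ ∈ Θ (so the Baron–Myerson-with-quantity-floor mechanism is not robustly optimal, and θ^m < θ̄). Then every solution q^OPT of (ROPT) satisfies q^OPT(θ) = q_ℓ for all θ ∈ [θ*, θ̄]. -/
open MeasureTheory Set

noncomputable section

section AuxProofs

open intervalIntegral MeasureTheory

variable {E : Env}

/-- Integral upper bound by the left endpoint value, for antitone continuous `P`. -/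
lemma aux_integral_le_const {P : ℝ → ℝ} {qb u v : ℝ}
    (hP : AntitoneOn P (Icc 0 qb)) (hPc : ContinuousOn P (Icc 0 qb))
    (h0 : 0 ≤ u) (huv : u ≤ v) (hv : v ≤ qb) :
    ∫ s in u..v, P s ≤ (v - u) * P u := by
  have hsub : uIcc u v ⊆ Icc 0 qb := by
    rw [uIcc_of_le huv]
    exact Icc_subset_Icc h0 hv
  have hint : IntervalIntegrable P volume u v := (hPc.mono hsub).intervalIntegrable
  have hconst : IntervalIntegrable (fun _ : ℝ => P u) volume u v := intervalIntegrable_const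
  have := intervalIntegral.integral_mono_on (μ := volume) huv hint hconst
    (fun x hx => hP ⟨h0, le_trans huv hv⟩ ⟨le_trans h0 hx.1, le_trans hx.2 hv⟩ hx.1)
  simpa [intervalIntegral.integral_const, smul_eq_mul] using this

/-- Integral lower bound by the right endpoint value, for antitone continuous `P`. -/
lemma aux_const_le_integral {P : ℝ → ℝ} {qb u v : ℝ}
    (hP : AntitoneOn P (Icc 0 qb)) (hPc : ContinuousOn P (Icc 0 qb))
    (h0 : 0 ≤ u) (huv : u ≤ v) (hv : v ≤ qb) :
    (v - u) * P v ≤ ∫ s in u..v, P s := by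
  have hsub : uIcc u v ⊆ Icc 0 qb := by
    rw [uIcc_of_le huv]
    exact Icc_subset_Icc h0 hv
  have hint : IntervalIntegrable P volume u v := (hPc.mono hsub).intervalIntegrable
  have hconst : IntervalIntegrable (fun _ : ℝ => P v) volume u v := intervalIntegrable_const
  have := intervalIntegral.integral_mono_on (μ := volume) huv hconst hint
    (fun x hx => hP ⟨le_trans h0 hx.1, le_trans hx.2 hv⟩ ⟨le_trans h0 huv, hv⟩ hx.2)
  simpa [intervalIntegral.integral_const, smul_eq_mul] using this

/-- Strict version of the upper bound, via a midpoint. -/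
lemma aux_integral_lt_const {P : ℝ → ℝ} {qb u v : ℝ}
    (hP : StrictAntiOn P (Icc 0 qb)) (hPc : ContinuousOn P (Icc 0 qb))
    (h0 : 0 ≤ u) (huv : u < v) (hv : v ≤ qb) :
    ∫ s in u..v, P s < (v - u) * P u := by
  set m := (u + v) / 2 with hm
  have hum : u < m := by rw [hm]; linarith
  have hmv : m < v := by rw [hm]; linarith
  have h0m : (0:ℝ) ≤ m := le_trans h0 hum.le
  have hmq : m ≤ qb := le_trans hmv.le hv
  have h1 : ∫ s in u..m, P s ≤ (m - u) * P u :=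
    aux_integral_le_const hP.antitoneOn hPc h0 hum.le hmq
  have h2 : ∫ s in m..v, P s ≤ (v - m) * P m :=
    aux_integral_le_const hP.antitoneOn hPc h0m hmv.le hv
  have hPm : P m < P u := hP ⟨h0, le_trans huv.le hv⟩ ⟨h0m, hmq⟩ hum
  have i1 : IntervalIntegrable P volume u m :=
    (hPc.mono (by rw [uIcc_of_le hum.le]; exact Icc_subset_Icc h0 hmq)).intervalIntegrable
  have i2 : IntervalIntegrable P volume m v :=
    (hPc.mono (by rw [uIcc_of_le hmv.le]; exact Icc_subset_Icc h0m hv)).intervalIntegrable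
  have hsplit : (∫ s in u..m, P s) + ∫ s in m..v, P s = ∫ s in u..v, P s :=
    intervalIntegral.integral_add_adjacent_intervals i1 i2
  have key : 0 < (v - m) * (P u - P m) := mul_pos (by linarith) (by linarith)
  nlinarith [h1, h2, hsplit, key]

/-- Strict version of the lower bound, via a midpoint. -/
lemma aux_const_lt_integral {P : ℝ → ℝ} {qb u v : ℝ}
    (hP : StrictAntiOn P (Icc 0 qb)) (hPc : ContinuousOn P (Icc 0 qb))
    (h0 : 0 ≤ u) (huv : u < v) (hv : v ≤ qb) :
    (v - u) * P v < ∫ s in u..v, P s := by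
  set m := (u + v) / 2 with hm
  have hum : u < m := by rw [hm]; linarith
  have hmv : m < v := by rw [hm]; linarith
  have h0m : (0:ℝ) ≤ m := le_trans h0 hum.le
  have hmq : m ≤ qb := le_trans hmv.le hv
  have h1 : (m - u) * P m ≤ ∫ s in u..m, P s :=
    aux_const_le_integral hP.antitoneOn hPc h0 hum.le hmq
  have h2 : (v - m) * P v ≤ ∫ s in m..v, P s :=
    aux_const_le_integral hP.antitoneOn hPc h0m hmv.le hv
  have hPm : P v < P m := hP ⟨h0m, hmq⟩ ⟨le_trans h0 huv.le, hv⟩ hmv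
  have i1 : IntervalIntegrable P volume u m :=
    (hPc.mono (by rw [uIcc_of_le hum.le]; exact Icc_subset_Icc h0 hmq)).intervalIntegrable
  have i2 : IntervalIntegrable P volume m v :=
    (hPc.mono (by rw [uIcc_of_le hmv.le]; exact Icc_subset_Icc h0m hv)).intervalIntegrable
  have hsplit : (∫ s in u..m, P s) + ∫ s in m..v, P s = ∫ s in u..v, P s :=
    intervalIntegral.integral_add_adjacent_intervals i1 i2
  have key : 0 < (m - u) * (P m - P v) := mul_pos (by linarith) (by linarith)
  nlinarith [h1, h2, hsplit, key]

/-- Difference of the primitive is the integral over the subinterval. -/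
lemma aux_prim_sub {P : ℝ → ℝ} {qb a b : ℝ}
    (hPc : ContinuousOn P (Icc 0 qb)) (ha : a ∈ Icc 0 qb) (hb : b ∈ Icc 0 qb) :
    (∫ s in (0:ℝ)..b, P s) - (∫ s in (0:ℝ)..a, P s) = ∫ s in a..b, P s := by
  apply intervalIntegral.integral_interval_sub_left
  · exact (hPc.mono (by rw [uIcc_of_le hb.1]; exact Icc_subset_Icc le_rfl hb.2)).intervalIntegrable
  · exact (hPc.mono (by rw [uIcc_of_le ha.1]; exact Icc_subset_Icc le_rfl ha.2)).intervalIntegrable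

lemma Env.Pl_qbar_le (E : Env) : E.Pl E.qbar ≤ E.θl := by
  by_contra h
  push_neg at h
  have := E.Dl_low E.θl h
  exact absurd (this ▸ E.Dl_lt) (lt_irrefl _)

lemma Env.ql_spec (E : Env) : E.ql ∈ Icc (0:ℝ) E.qbar ∧ E.Pl E.ql = E.θu :=
  E.Dl_inv E.θu (le_trans E.Pl_qbar_le E.θlu.le) E.Pl0.le

lemma Env.ql_pos (E : Env) : 0 < E.ql := by
  rcases E.ql_spec with ⟨hmem, heq⟩
  rcases lt_or_eq_of_le hmem.1 with h | h
  · exact h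
  · exfalso; rw [← h] at heq; exact absurd heq (ne_of_lt E.Pl0).symm

lemma Env.ql_lt_qbar (E : Env) : E.ql < E.qbar := by
  rcases E.ql_spec with ⟨hmem, heq⟩
  rcases lt_or_eq_of_le hmem.2 with h | h
  · exact h
  · exfalso; rw [h] at heq
    have := E.Pl_qbar_le
    rw [heq] at this
    exact absurd (lt_of_lt_of_le E.θlu this) (lt_irrefl _)

/-- Every feasible schedule procures `q_ℓ` at the highest type. -/
lemma aux_qend {q : ℝ → ℝ} (hfeas : E.FeasibleROPT q) : q E.θu = E.ql := by
  have hθuΘ : E.θu ∈ E.Θ := ⟨E.θlu.le, le_rfl⟩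
  have h := hfeas.2 E.θu hθuΘ
  rcases E.ql_spec with ⟨hqlmem, hPlql⟩
  unfold Env.Wl at h
  rw [intervalIntegral.integral_same] at h
  have hy := hfeas.1.2 E.θu hθuΘ
  set y := q E.θu with hydef
  have hVs : E.Vl y - E.Vl E.ql = ∫ s in E.ql..y, E.Pl s :=
    aux_prim_sub E.Pl_cont hqlmem hy
  rcases lt_trichotomy y E.ql with hlt | heq | hgt
  · exfalso
    have := aux_const_lt_integral E.Pl_anti E.Pl_cont hy.1 hlt hqlmem.2
    rw [hPlql] at this
    have hVs2 : E.Vl E.ql - E.Vl y = ∫ s in y..E.ql, E.Pl s :=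
      aux_prim_sub E.Pl_cont hy hqlmem
    unfold Env.Gstar at h
    nlinarith [this, hVs2, h]
  · exact heq
  · exfalso
    have := aux_integral_lt_const E.Pl_anti E.Pl_cont hqlmem.1 hgt hy.2
    rw [hPlql] at this
    unfold Env.Gstar at h
    nlinarith [this, hVs, h]

variable {Mo : Model E}

lemma aux_fstar_int (Mo : Model E) : IntervalIntegrable Mo.fstar volume E.θl E.θu := by
  by_contra h
  have h1 := Mo.Fstar_ac E.θu ⟨E.θlu.le, le_rfl⟩
  rw [intervalIntegral.integral_undef h, Mo.Fstar_u] at h1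
  exact one_ne_zero h1

lemma aux_zstar_l (Mo : Model E) : Mo.zstar E.θl = E.θl := by
  unfold Model.zstar
  rw [Mo.Fstar_l]
  simp

lemma aux_zstar_cont (Mo : Model E) : ContinuousOn Mo.zstar E.Θ := Mo.zstar_cont

lemma aux_zstar_mono (Mo : Model E) : StrictMonoOn Mo.zstar E.Θ := Mo.zstar_mono

/-- In the interior case, `P*(q_ℓ) = z*(θ*)`. -/
lemma aux_Pstar_ql (Mo : Model E) {θs : ℝ} (hmem : θs ∈ E.Θ) (hqbm : Mo.qBM θs = E.ql) :
    Mo.Pstar E.ql = Mo.zstar θs := by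
  set z := Mo.zstar θs with hz
  by_cases h1 : Mo.Pstar 0 < z
  · exfalso
    have := Mo.Dstar_high z h1
    unfold Model.qBM at hqbm
    rw [← hz, this] at hqbm
    exact absurd hqbm.symm (ne_of_gt E.ql_pos)
  by_cases h2 : z < Mo.Pstar E.qbar
  · exfalso
    have := Mo.Dstar_low z h2
    unfold Model.qBM at hqbm
    rw [← hz, this] at hqbm
    exact absurd hqbm (ne_of_gt E.ql_lt_qbar)
  push_neg at h1 h2
  obtain ⟨-, hinv⟩ := Mo.Dstar_inv z h2 h1
  unfold Model.qBM at hqbm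
  rw [← hz] at hqbm
  rw [hqbm] at hinv
  exact hinv

/-- In the interior case, `θl < θ*`. -/
lemma aux_θl_lt_θs (Mo : Model E) {θs : ℝ} (hmem : θs ∈ E.Θ) (hqbm : Mo.qBM θs = E.ql) :
    E.θl < θs := by
  have hD : E.ql < Mo.Dstar E.θl := by
    by_cases hlow : E.θl < Mo.Pstar E.qbar
    · rw [Mo.Dstar_low E.θl hlow]; exact E.ql_lt_qbar
    · push_neg at hlow
      have hhi : E.θl ≤ Mo.Pstar 0 :=
        le_trans (le_trans E.θlu.le E.Pl0.le) (Mo.Pstar_ge 0 ⟨le_rfl, E.qbar_pos.le⟩)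
      obtain ⟨hdmem, hdinv⟩ := Mo.Dstar_inv E.θl hlow hhi
      by_contra hle
      push_neg at hle
      have hPle : Mo.Pstar E.ql ≤ Mo.Pstar (Mo.Dstar E.θl) :=
        Mo.Pstar_anti.antitoneOn hdmem E.ql_spec.1 hle
      rw [hdinv] at hPle
      have hPge : E.θu ≤ Mo.Pstar E.ql := by
        rw [← E.ql_spec.2]; exact Mo.Pstar_ge E.ql E.ql_spec.1
      linarith [E.θlu]
  have hne : θs ≠ E.θl := by
    intro h
    rw [h] at hqbm
    unfold Model.qBM at hqbm
    rw [aux_zstar_l] at hqbm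
    rw [hqbm] at hD
    exact lt_irrefl _ hD
  exact lt_of_le_of_ne hmem.1 (Ne.symm hne)

lemma aux_Vstar_cont (Mo : Model E) : ContinuousOn Mo.Vstar (Icc 0 E.qbar) := by
  have h : IntegrableOn Mo.Pstar (uIcc 0 E.qbar) volume := by
    rw [uIcc_of_le E.qbar_pos.le]
    exact Mo.Pstar_cont.integrableOn_Icc
  have := intervalIntegral.continuousOn_primitive_interval (μ := volume) h
  rwa [uIcc_of_le E.qbar_pos.le] at this

/-- Integrability of the (ROPT) objective integrand for any schedule. -/
lemma aux_J_integrable (Mo : Model E) {q : ℝ → ℝ} (hA : AntitoneOn q E.Θ)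
    (hB : ∀ θ ∈ E.Θ, q θ ∈ Icc (0:ℝ) E.qbar) :
    IntervalIntegrable (fun θ => (Mo.Vstar (q θ) - Mo.zstar θ * q θ) * Mo.fstar θ)
      volume E.θl E.θu := by
  rw [intervalIntegrable_iff_integrableOn_Ioc_of_le E.θlu.le]
  have hsubΘ : Ioc E.θl E.θu ⊆ E.Θ := Ioc_subset_Icc_self
  have hfint : IntegrableOn Mo.fstar (Ioc E.θl E.θu) volume := (aux_fstar_int Mo).1
  have hqint : IntegrableOn q (Ioc E.θl E.θu) volume := by
    have : AntitoneOn q (uIcc E.θl E.θu) := by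
      rw [uIcc_of_le E.θlu.le]; exact hA
    exact this.intervalIntegrable.1
  have hqm : AEStronglyMeasurable q (volume.restrict (Ioc E.θl E.θu)) :=
    hqint.aestronglyMeasurable
  set cl : ℝ → ℝ := fun y => max 0 (min y E.qbar) with hcl
  have hclc : Continuous cl := continuous_const.max (continuous_id.min continuous_const)
  have hclmem : ∀ y, cl y ∈ Icc (0:ℝ) E.qbar := fun y =>
    ⟨le_max_left _ _, max_le E.qbar_pos.le (min_le_right _ _)⟩
  have hVcl : Continuous (fun y => Mo.Vstar (cl y)) :=
    (aux_Vstar_cont Mo).comp_continuous hclc hclmem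
  have hVq : AEStronglyMeasurable (fun θ => Mo.Vstar (q θ))
      (volume.restrict (Ioc E.θl E.θu)) := by
    apply (hVcl.comp_aestronglyMeasurable hqm).congr
    rw [Filter.EventuallyEq, ae_restrict_iff' measurableSet_Ioc]
    filter_upwards with θ hθ
    have hm := hB θ (hsubΘ hθ)
    have : cl (q θ) = q θ := by
      rw [hcl]; simp only [min_eq_left hm.2, max_eq_right hm.1]
    rw [this]
  have hzm : AEStronglyMeasurable Mo.zstar (volume.restrict (Ioc E.θl E.θu)) :=
    ((aux_zstar_cont Mo).mono hsubΘ).aestronglyMeasurable measurableSet_Ioc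
  have hg : AEStronglyMeasurable (fun θ => Mo.Vstar (q θ) - Mo.zstar θ * q θ)
      (volume.restrict (Ioc E.θl E.θu)) := hVq.sub (hzm.mul hqm)
  obtain ⟨C1, hC1⟩ := (isCompact_Icc : IsCompact (Icc (0:ℝ) E.qbar)).exists_bound_of_continuousOn
    (aux_Vstar_cont Mo)
  obtain ⟨C2, hC2⟩ := (isCompact_Icc : IsCompact E.Θ).exists_bound_of_continuousOn
    (aux_zstar_cont Mo)
  have hC2nn : 0 ≤ C2 := le_trans (norm_nonneg _) (hC2 E.θl ⟨le_rfl, E.θlu.le⟩)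
  have hbound : ∀ᵐ θ ∂(volume.restrict (Ioc E.θl E.θu)),
      ‖Mo.Vstar (q θ) - Mo.zstar θ * q θ‖ ≤ C1 + C2 * E.qbar := by
    rw [ae_restrict_iff' measurableSet_Ioc]
    filter_upwards with θ hθ
    have hθΘ := hsubΘ hθ
    have hm := hB θ hθΘ
    have h1 : ‖Mo.Vstar (q θ)‖ ≤ C1 := hC1 _ hm
    have h2 : ‖Mo.zstar θ‖ ≤ C2 := hC2 _ hθΘ
    have h3 : ‖q θ‖ ≤ E.qbar := by
      rw [Real.norm_eq_abs, abs_le]; exact ⟨by linarith [hm.1, E.qbar_pos], hm.2⟩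
    calc ‖Mo.Vstar (q θ) - Mo.zstar θ * q θ‖
        ≤ ‖Mo.Vstar (q θ)‖ + ‖Mo.zstar θ * q θ‖ := norm_sub_le _ _
      _ ≤ C1 + C2 * E.qbar := by
          rw [norm_mul]
          exact add_le_add h1 (mul_le_mul h2 h3 (norm_nonneg _) hC2nn)
  exact MeasureTheory.Integrable.bdd_mul hfint hg hbound

end AuxProofs

/-- Proposition 2(a): if the Baron–Myerson-with-quantity-floor mechanism is not robustly
optimal, then every solution of (ROPT) procures exactly `q_ℓ` on `[θ*, θu]`. -/
theorem ROPT_floor_at_top (E : Env) (Mo : Model E)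
    (hviol : ∃ θ ∈ E.Θ, E.Wl Mo.qstar θ < E.Gstar)
    (θs : ℝ) (hθs : Mo.IsThetaStar θs)
    (qOPT : ℝ → ℝ) (hOPT : Mo.SolvesROPT qOPT) :
    ∀ θ ∈ Icc θs E.θu, qOPT θ = E.ql := by
  obtain ⟨hfeas, hopt⟩ := hOPT
  obtain ⟨hanti, hbdd⟩ := hfeas.1
  have hθuΘ : E.θu ∈ E.Θ := ⟨E.θlu.le, le_rfl⟩
  have hθlΘ : E.θl ∈ E.Θ := ⟨le_rfl, E.θlu.le⟩
  have hend : qOPT E.θu = E.ql := aux_qend hfeas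
  have hqge : ∀ θ ∈ E.Θ, E.ql ≤ qOPT θ := fun θ hθ => by
    have := hanti hθ hθuΘ hθ.2
    rwa [hend] at this
  rcases hθs with ⟨hlt, hmem, hqbm⟩ | ⟨hge, rfl⟩
  swap
  · intro θ hθ
    have : θ = E.θu := le_antisymm hθ.2 hθ.1
    rw [this]; exact hend
  intro θ0 hθ0
  by_contra hne
  have hθ0Θ : θ0 ∈ E.Θ := ⟨le_trans hmem.1 hθ0.1, hθ0.2⟩
  have hx : E.ql < qOPT θ0 := lt_of_le_of_ne (hqge θ0 hθ0Θ) (Ne.symm hne)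
  set x := qOPT θ0 with hxdef
  have hx0 : (0:ℝ) ≤ x := (hbdd θ0 hθ0Θ).1
  have hxbar : x ≤ E.qbar := (hbdd θ0 hθ0Θ).2
  have hqlmem := E.ql_spec.1
  have hPx : Mo.Pstar x < Mo.Pstar E.ql :=
    Mo.Pstar_anti hqlmem ⟨hx0, hxbar⟩ hx
  have hPql_eq : Mo.Pstar E.ql = Mo.zstar θs := aux_Pstar_ql Mo hmem hqbm
  -- ε0
  set ε0 := (x - E.ql) * Mo.Pstar E.ql - ∫ s in E.ql..x, Mo.Pstar s with hε0def
  have hε0 : 0 < ε0 := by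
    have := aux_integral_lt_const Mo.Pstar_anti Mo.Pstar_cont hqlmem.1 hx hxbar
    rw [hε0def]; linarith
  -- η
  set η := min (ε0 / (2 * (x - E.ql))) ((Mo.Pstar E.ql - Mo.Pstar x) / 2) with hηdef
  have hη0 : 0 < η := lt_min (div_pos hε0 (by linarith)) (by linarith)
  have hη1 : η * (x - E.ql) ≤ ε0 / 2 := by
    have h1 : η ≤ ε0 / (2 * (x - E.ql)) := min_le_left _ _
    have h2 : (0:ℝ) < x - E.ql := by linarith
    calc η * (x - E.ql) ≤ ε0 / (2 * (x - E.ql)) * (x - E.ql) :=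
          mul_le_mul_of_nonneg_right h1 h2.le
      _ = ε0 / 2 := by field_simp
  have hη2 : 2 * η ≤ Mo.Pstar E.ql - Mo.Pstar x := by
    have := min_le_right (ε0 / (2 * (x - E.ql))) ((Mo.Pstar E.ql - Mo.Pstar x) / 2)
    rw [← hηdef] at this
    linarith
  -- choose the cut point c
  obtain ⟨c, hcΘ, hclt, hzc⟩ :
      ∃ c, c ∈ E.Θ ∧ c < θ0 ∧ Mo.Pstar E.ql - η ≤ Mo.zstar c := by
    rcases eq_or_lt_of_le hθ0.1 with heq | hlt'
    · -- θs = θ0: use continuity of z* at θs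
      have hcont : ContinuousWithinAt Mo.zstar E.Θ θs := (aux_zstar_cont Mo) θs hmem
      rw [Metric.continuousWithinAt_iff] at hcont
      obtain ⟨δ, hδ0, hδ⟩ := hcont η hη0
      have hθlθs : E.θl < θs := aux_θl_lt_θs Mo hmem hqbm
      refine ⟨max E.θl (θs - δ / 2), ⟨le_max_left _ _, ?_⟩, ?_, ?_⟩
      · exact max_le E.θlu.le (by linarith [hmem.2])
      · rw [← heq]; exact max_lt hθlθs (by linarith)
      · have hcmem : max E.θl (θs - δ / 2) ∈ E.Θ :=
          ⟨le_max_left _ _, max_le E.θlu.le (by linarith [hmem.2])⟩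
        have hdist : dist (max E.θl (θs - δ / 2)) θs < δ := by
          rw [Real.dist_eq, abs_lt]
          constructor
          · have : θs - δ / 2 ≤ max E.θl (θs - δ / 2) := le_max_right _ _
            linarith
          · have : max E.θl (θs - δ / 2) < θs := max_lt hθlθs (by linarith)
            linarith
        have := hδ hcmem hdist
        rw [Real.dist_eq, abs_lt] at this
        rw [hPql_eq]
        linarith [this.1]
    · exact ⟨θs, hmem, hlt', by rw [hPql_eq]; linarith⟩
  -- the competitor schedule
  set q' : ℝ → ℝ := fun θ => if θ ≤ c then qOPT θ else E.ql with hq'def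
  have hq'cases : ∀ θ, q' θ = qOPT θ ∨ q' θ = E.ql := fun θ => by
    by_cases h : θ ≤ c
    · left; simp [hq'def, h]
    · right; simp [hq'def, h]
  have hq'le : ∀ θ ∈ E.Θ, q' θ ≤ qOPT θ := fun θ hθ => by
    rcases hq'cases θ with h | h
    · rw [h]
    · rw [h]; exact hqge θ hθ
  have hq'left : ∀ θ, θ ≤ c → q' θ = qOPT θ := fun θ h => by simp [hq'def, h]
  have hq'right : ∀ θ, c < θ → q' θ = E.ql := fun θ h => by
    simp [hq'def, not_le.mpr h]
  have hanti' : AntitoneOn q' E.Θ := by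
    intro a ha b hb hab
    by_cases hbc : b ≤ c
    · rw [hq'left a (hab.trans hbc), hq'left b hbc]
      exact hanti ha hb hab
    · push_neg at hbc
      rw [hq'right b hbc]
      rcases hq'cases a with h | h
      · rw [h]; exact hqge a ha
      · rw [h]
  have hbdd' : ∀ θ ∈ E.Θ, q' θ ∈ Icc (0:ℝ) E.qbar := fun θ hθ => by
    rcases hq'cases θ with h | h
    · rw [h]; exact hbdd θ hθ
    · rw [h]; exact hqlmem
  have hsubuIcc : ∀ a b : ℝ, a ∈ E.Θ → b ∈ E.Θ → uIcc a b ⊆ E.Θ := fun a b ha hb =>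
    uIcc_subset_Icc ha hb
  have hqint : ∀ a b : ℝ, a ∈ E.Θ → b ∈ E.Θ → IntervalIntegrable qOPT volume a b :=
    fun a b ha hb => (hanti.mono (hsubuIcc a b ha hb)).intervalIntegrable
  have hq'int : ∀ a b : ℝ, a ∈ E.Θ → b ∈ E.Θ → IntervalIntegrable q' volume a b :=
    fun a b ha hb => (hanti'.mono (hsubuIcc a b ha hb)).intervalIntegrable
  -- feasibility of the competitor
  have hfeas' : E.FeasibleROPT q' := by
    refine ⟨⟨hanti', hbdd'⟩, ?_⟩
    intro θ hθ
    by_cases hc : θ ≤ c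
    · have h1 : ∫ y in θ..E.θu, q' y ≤ ∫ y in θ..E.θu, qOPT y := by
        apply intervalIntegral.integral_mono_on hθ.2 (hq'int θ E.θu hθ hθuΘ)
          (hqint θ E.θu hθ hθuΘ)
        intro y hy
        exact hq'le y ⟨le_trans hθ.1 hy.1, hy.2⟩
      have h2 := hfeas.2 θ hθ
      unfold Env.Wl at h2 ⊢
      rw [hq'left θ hc]
      linarith
    · push_neg at hc
      have hIconst : ∫ y in θ..E.θu, q' y = (E.θu - θ) * E.ql := by
        rw [intervalIntegral.integral_of_le hθ.2]
        rw [setIntegral_congr_fun measurableSet_Ioc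
          (g := fun _ => E.ql) (fun y hy => hq'right y (lt_trans hc hy.1))]
        rw [setIntegral_const, Real.volume_real_Ioc_of_le hθ.2]
        simp [smul_eq_mul]
      unfold Env.Wl
      rw [hq'right θ hc, hIconst]
      unfold Env.Gstar
      have : E.Vl E.ql - θ * E.ql - (E.θu - θ) * E.ql = E.Vl E.ql - E.θu * E.ql := by ring
      rw [this]
  -- pointwise comparisons of the virtual surplus
  have hVsub : ∀ y : ℝ, y ∈ Icc (0:ℝ) E.qbar →
      Mo.Vstar y - Mo.Vstar E.ql = ∫ s in E.ql..y, Mo.Pstar s := fun y hy =>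
    aux_prim_sub Mo.Pstar_cont hqlmem hy
  have hcore_nonneg : ∀ θ ∈ E.Θ, θs ≤ θ → ∀ y, E.ql ≤ y → y ≤ E.qbar →
      Mo.Vstar y - Mo.zstar θ * y ≤ Mo.Vstar E.ql - Mo.zstar θ * E.ql := by
    intro θ hθ hθs' y hy1 hy2
    have hz : Mo.Pstar E.ql ≤ Mo.zstar θ := by
      rw [hPql_eq]
      exact (aux_zstar_mono Mo).monotoneOn hmem hθ hθs'
    have hint := hVsub y ⟨le_trans hqlmem.1 hy1, hy2⟩
    have hle : ∫ s in E.ql..y, Mo.Pstar s ≤ (y - E.ql) * Mo.Pstar E.ql :=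
      aux_integral_le_const Mo.Pstar_anti.antitoneOn Mo.Pstar_cont hqlmem.1 hy1 hy2
    linarith [hint, hle, mul_nonneg (sub_nonneg.2 hy1) (sub_nonneg.2 hz)]
  have hcore_win : ∀ θ ∈ E.Θ, Mo.Pstar E.ql - η ≤ Mo.zstar θ → ∀ y, x ≤ y → y ≤ E.qbar →
      Mo.Vstar y - Mo.zstar θ * y + ε0 / 2 ≤ Mo.Vstar E.ql - Mo.zstar θ * E.ql := by
    intro θ hθ hz y hy1 hy2
    set z := Mo.zstar θ with hzdef
    have hy0 : E.ql ≤ y := le_trans hx.le hy1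
    have hint := hVsub y ⟨le_trans hqlmem.1 hy0, hy2⟩
    have i1 : IntervalIntegrable Mo.Pstar volume E.ql x := by
      apply ContinuousOn.intervalIntegrable
      apply Mo.Pstar_cont.mono
      rw [uIcc_of_le hx.le]
      exact Icc_subset_Icc hqlmem.1 hxbar
    have i2 : IntervalIntegrable Mo.Pstar volume x y := by
      apply ContinuousOn.intervalIntegrable
      apply Mo.Pstar_cont.mono
      rw [uIcc_of_le hy1]
      exact Icc_subset_Icc hx0 hy2
    have hsplit : (∫ s in E.ql..x, Mo.Pstar s) + (∫ s in x..y, Mo.Pstar s)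
        = ∫ s in E.ql..y, Mo.Pstar s :=
      intervalIntegral.integral_add_adjacent_intervals i1 i2
    have h2 : ∫ s in x..y, Mo.Pstar s ≤ (y - x) * Mo.Pstar x :=
      aux_integral_le_const Mo.Pstar_anti.antitoneOn Mo.Pstar_cont hx0 hy1 hy2
    have ha : 0 ≤ (y - x) * (z - Mo.Pstar x) :=
      mul_nonneg (by linarith) (by linarith)
    have hb : (x - E.ql) * (Mo.Pstar E.ql - z) ≤ ε0 / 2 := by
      calc (x - E.ql) * (Mo.Pstar E.ql - z) ≤ (x - E.ql) * η :=
            mul_le_mul_of_nonneg_left (by linarith) (by linarith)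
        _ = η * (x - E.ql) := by ring
        _ ≤ ε0 / 2 := hη1
    have hε0eq : ∫ s in E.ql..x, Mo.Pstar s = (x - E.ql) * Mo.Pstar E.ql - ε0 := by
      rw [hε0def]; ring
    linarith [ha, hb, h2, hint, hsplit, hε0eq]
  -- integrability of the objective integrands
  have hJ1 := aux_J_integrable Mo hanti hbdd
  have hJ2 := aux_J_integrable Mo hanti' hbdd'
  have hle := hopt q' hfeas'
  -- the difference of objectives
  set A : ℝ → ℝ := fun θ => (Mo.Vstar (qOPT θ) - Mo.zstar θ * qOPT θ) * Mo.fstar θ with hAdef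
  set A' : ℝ → ℝ := fun θ => (Mo.Vstar (q' θ) - Mo.zstar θ * q' θ) * Mo.fstar θ with hA'def
  have hdiff : Mo.J q' - Mo.J qOPT = ∫ θ in E.θl..E.θu, (A' θ - A θ) := by
    unfold Model.J
    rw [intervalIntegral.integral_sub hJ2 hJ1]
  have hsub1 : uIcc E.θl c ⊆ uIcc E.θl E.θu := by
    rw [uIcc_of_le E.θlu.le]
    exact uIcc_subset_Icc hθlΘ hcΘ
  have hsub2 : uIcc c E.θu ⊆ uIcc E.θl E.θu := by
    rw [uIcc_of_le E.θlu.le]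
    exact uIcc_subset_Icc hcΘ hθuΘ
  have hsub3 : uIcc c θ0 ⊆ uIcc E.θl E.θu := by
    rw [uIcc_of_le E.θlu.le]
    exact uIcc_subset_Icc hcΘ hθ0Θ
  have hsub4 : uIcc θ0 E.θu ⊆ uIcc E.θl E.θu := by
    rw [uIcc_of_le E.θlu.le]
    exact uIcc_subset_Icc hθ0Θ hθuΘ
  have hD := hJ2.sub hJ1
  have hadj1 : IntervalIntegrable (fun θ => A' θ - A θ) volume E.θl c := hD.mono_set hsub1
  have hadj2 : IntervalIntegrable (fun θ => A' θ - A θ) volume c E.θu := hD.mono_set hsub2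
  have hadj3 : IntervalIntegrable (fun θ => A' θ - A θ) volume c θ0 := hD.mono_set hsub3
  have hadj4 : IntervalIntegrable (fun θ => A' θ - A θ) volume θ0 E.θu := hD.mono_set hsub4
  have hsplit1 : (∫ θ in E.θl..c, (A' θ - A θ)) + (∫ θ in c..E.θu, (A' θ - A θ))
      = ∫ θ in E.θl..E.θu, (A' θ - A θ) :=
    intervalIntegral.integral_add_adjacent_intervals hadj1 hadj2
  have hsplit2 : (∫ θ in c..θ0, (A' θ - A θ)) + (∫ θ in θ0..E.θu, (A' θ - A θ))
      = ∫ θ in c..E.θu, (A' θ - A θ) :=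
    intervalIntegral.integral_add_adjacent_intervals hadj3 hadj4
  have hzero : (∫ θ in E.θl..c, (A' θ - A θ)) = 0 := by
    have heq : EqOn (fun θ => A' θ - A θ) (fun _ => (0:ℝ)) (uIcc E.θl c) := by
      intro θ hθ
      rw [uIcc_of_le hcΘ.1] at hθ
      have : q' θ = qOPT θ := hq'left θ hθ.2
      simp only [hA'def, hAdef, this, sub_self]
    rw [intervalIntegral.integral_congr heq, intervalIntegral.integral_zero]
  have htail : 0 ≤ ∫ θ in θ0..E.θu, (A' θ - A θ) := by
    apply intervalIntegral.integral_nonneg hθ0.2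
    intro u hu
    have huΘ : u ∈ E.Θ := ⟨le_trans hθ0Θ.1 hu.1, hu.2⟩
    have hq'u : q' u = E.ql := hq'right u (lt_of_lt_of_le hclt hu.1)
    have hy := hbdd u huΘ
    have hcore := hcore_nonneg u huΘ (le_trans hθ0.1 hu.1) (qOPT u) (hqge u huΘ) hy.2
    have hfpos := Mo.fstar_pos u huΘ
    simp only [hA'def, hAdef, hq'u]
    have hmul := mul_le_mul_of_nonneg_right hcore (le_of_lt hfpos)
    linarith [hmul]
  have hwin : ε0 / 2 * ∫ θ in c..θ0, Mo.fstar θ ≤ ∫ θ in c..θ0, (A' θ - A θ) := by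
    have hfsint : IntervalIntegrable Mo.fstar volume c θ0 := by
      apply (aux_fstar_int Mo).mono_set
      rw [uIcc_of_le E.θlu.le]
      exact uIcc_subset_Icc hcΘ hθ0Θ
    rw [← intervalIntegral.integral_const_mul]
    rw [intervalIntegral.integral_of_le hclt.le, intervalIntegral.integral_of_le hclt.le]
    apply setIntegral_mono_on
    · exact ((intervalIntegrable_iff_integrableOn_Ioc_of_le hclt.le).1
        (hfsint.const_mul (ε0 / 2)))
    · exact (intervalIntegrable_iff_integrableOn_Ioc_of_le hclt.le).1 hadj3
    · exact measurableSet_Ioc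
    · intro u hu
      have huΘ : u ∈ E.Θ := ⟨le_trans hcΘ.1 hu.1.le, le_trans hu.2 hθ0Θ.2⟩
      have hq'u : q' u = E.ql := hq'right u hu.1
      have hzu : Mo.Pstar E.ql - η ≤ Mo.zstar u := by
        rcases eq_or_lt_of_le (le_of_lt hu.1) with heq | hlt'
        · rw [← heq]; exact hzc
        · have := (aux_zstar_mono Mo) hcΘ huΘ hlt'
          linarith
      have hy := hbdd u huΘ
      have hyx : x ≤ qOPT u := by
        have := hanti huΘ hθ0Θ hu.2
        rwa [← hxdef] at this
      have hcore := hcore_win u huΘ hzu (qOPT u) hyx hy.2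
      have hfpos := Mo.fstar_pos u huΘ
      simp only [hA'def, hAdef, hq'u]
      have hmul := mul_le_mul_of_nonneg_right hcore (le_of_lt hfpos)
      linarith [hmul]
  have hfspos : 0 < ∫ θ in c..θ0, Mo.fstar θ := by
    apply intervalIntegral.intervalIntegral_pos_of_pos_on
    · apply (aux_fstar_int Mo).mono_set
      rw [uIcc_of_le E.θlu.le]
      exact uIcc_subset_Icc hcΘ hθ0Θ
    · intro u hu
      exact Mo.fstar_pos u ⟨le_trans hcΘ.1 hu.1.le, le_trans hu.2.le hθ0Θ.2⟩
    · exact hclt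
  have : 0 < Mo.J q' - Mo.J qOPT := by
    rw [hdiff, ← hsplit1, hzero, ← hsplit2]
    have h1 : 0 < ε0 / 2 * ∫ θ in c..θ0, Mo.fstar θ :=
      mul_pos (by linarith) hfspos
    linarith
  linarith
end
end

section
/- Suppose W̲(θ, q*) < G* for some θ ∈ Θ (so the Baron–Myerson-with-quantity-floor mechanism is not robustly optimal). Then every solution q^OPT of (ROPT) satisfies q^OPT(θ) ≤ q^BM(θ) for all θ ∈ (θ̲, θ*), and the set {θ ∈ [θ^m, θ*) : q^OPT(θ) < q^BM(θ)} has positive Lebesgue measure. -/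
open MeasureTheory Set

noncomputable section

section Aux
namespace RobustAux
open intervalIntegral


variable {qb : ℝ} {P : ℝ → ℝ}

theorem Pint (hqb : 0 ≤ qb) (hP : ContinuousOn P (Icc 0 qb)) {a b : ℝ}
    (ha : a ∈ Icc (0:ℝ) qb) (hb : b ∈ Icc (0:ℝ) qb) :
    IntervalIntegrable P volume a b :=
  (hP.mono (uIcc_subset_Icc ha hb)).intervalIntegrable

theorem Vdiff (hqb : 0 ≤ qb) (hP : ContinuousOn P (Icc 0 qb)) {a b : ℝ}
    (ha : a ∈ Icc (0:ℝ) qb) (hb : b ∈ Icc (0:ℝ) qb) :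
    (∫ s in (0:ℝ)..b, P s) - (∫ s in (0:ℝ)..a, P s) = ∫ s in a..b, P s := by
  have h1 : IntervalIntegrable P volume 0 a := Pint hqb hP ⟨le_rfl, hqb⟩ ha
  have h2 : IntervalIntegrable P volume a b := Pint hqb hP ha hb
  have := integral_add_adjacent_intervals h1 h2
  linarith

theorem Pint_le (hqb : 0 ≤ qb) (hP : ContinuousOn P (Icc 0 qb))
    (hanti : AntitoneOn P (Icc 0 qb)) {a b : ℝ}
    (ha : a ∈ Icc (0:ℝ) qb) (hb : b ∈ Icc (0:ℝ) qb) (hab : a ≤ b) :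
    (∫ s in a..b, P s) ≤ (b - a) * P a := by
  have h2 : IntervalIntegrable P volume a b := Pint hqb hP ha hb
  have hmono : ∀ x ∈ Icc a b, P x ≤ P a := fun x hx =>
    hanti ha ⟨le_trans ha.1 hx.1, le_trans hx.2 hb.2⟩ hx.1
  have := integral_mono_on hab h2 intervalIntegrable_const hmono
  simpa [smul_eq_mul] using this

theorem Pint_ge (hqb : 0 ≤ qb) (hP : ContinuousOn P (Icc 0 qb))
    (hanti : AntitoneOn P (Icc 0 qb)) {a b : ℝ}
    (ha : a ∈ Icc (0:ℝ) qb) (hb : b ∈ Icc (0:ℝ) qb) (hab : a ≤ b) :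
    (b - a) * P b ≤ ∫ s in a..b, P s := by
  have h2 : IntervalIntegrable P volume a b := Pint hqb hP ha hb
  have hmono : ∀ x ∈ Icc a b, P b ≤ P x := fun x hx =>
    hanti ⟨le_trans ha.1 hx.1, le_trans hx.2 hb.2⟩ hb hx.2
  have := integral_mono_on hab intervalIntegrable_const h2 hmono
  simpa [smul_eq_mul] using this

/-- Unimodality of `x ↦ V x − β x` for `V` a primitive of an antitone `P`. -/
theorem unimodal (hqb : 0 ≤ qb) (hP : ContinuousOn P (Icc 0 qb))
    (hanti : AntitoneOn P (Icc 0 qb)) {β GG w c x : ℝ}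
    (hw : w ∈ Icc (0:ℝ) qb) (hc : c ∈ Icc (0:ℝ) qb) (hx : x ∈ Icc (0:ℝ) qb)
    (h1 : w ≤ c) (h2 : c ≤ x)
    (hW : GG ≤ (∫ s in (0:ℝ)..w, P s) - β * w)
    (hX : GG ≤ (∫ s in (0:ℝ)..x, P s) - β * x) :
    GG ≤ (∫ s in (0:ℝ)..c, P s) - β * c := by
  by_contra hcon
  push_neg at hcon
  have hwc : w < c := by
    rcases lt_or_eq_of_le h1 with h | h
    · exact h
    · rw [h] at hW; exact absurd hW (not_le.mpr hcon)
  have hdw : (∫ s in w..c, P s) < β * (c - w) := by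
    have := Vdiff hqb hP hw hc
    nlinarith
  have hPc : P c < β := by
    have hlow := Pint_ge hqb hP hanti hw hc h1
    nlinarith [sub_pos.mpr hwc]
  have hup := Pint_le hqb hP hanti hc hx h2
  have hdx := Vdiff hqb hP hc hx
  nlinarith [sub_nonneg.mpr h2, mul_le_mul_of_nonneg_left hPc.le (sub_nonneg.mpr h2)]

theorem VcontOn (hqb : 0 ≤ qb) (hP : ContinuousOn P (Icc 0 qb)) :
    ContinuousOn (fun x => ∫ s in (0:ℝ)..x, P s) (Icc 0 qb) := by
  have h := intervalIntegral.continuousOn_primitive_interval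
    (μ := volume) (f := P) (a := 0) (b := qb) (by rw [uIcc_of_le hqb]; exact hP.integrableOn_Icc)
  rwa [uIcc_of_le hqb] at h


variable (E : Env)

theorem thl_mem : E.θl ∈ E.Θ := ⟨le_rfl, E.θlu.le⟩
theorem thu_mem : E.θu ∈ E.Θ := ⟨E.θlu.le, le_rfl⟩

theorem Pl_qbar_le : E.Pl E.qbar ≤ E.θl := by
  by_contra h
  push_neg at h
  have h2 := E.Dl_low E.θl h
  have := E.Dl_lt
  rw [h2] at this
  exact lt_irrefl _ this

theorem ql_spec : E.ql ∈ Icc (0:ℝ) E.qbar ∧ E.Pl E.ql = E.θu :=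
  E.Dl_inv E.θu (le_trans (Pl_qbar_le E) E.θlu.le) E.Pl0.le

theorem ql_mem : E.ql ∈ Icc (0:ℝ) E.qbar := (ql_spec E).1

theorem Pl_ql : E.Pl E.ql = E.θu := (ql_spec E).2

theorem ql_pos : 0 < E.ql := by
  rcases lt_or_eq_of_le (ql_mem E).1 with h | h
  · exact h
  · exfalso
    have := Pl_ql E
    rw [← h] at this
    exact absurd this (ne_of_gt E.Pl0)

theorem h_lt_Gstar {x : ℝ} (hx : x ∈ Icc (0:ℝ) E.qbar) (hne : x ≠ E.ql) :
    E.Vl x - E.θu * x < E.Gstar := by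
  have hqb : (0:ℝ) ≤ E.qbar := E.qbar_pos.le
  have hql := ql_mem E
  have hPlql := Pl_ql E
  have hanti := E.Pl_anti.antitoneOn
  rcases lt_or_gt_of_ne hne with hlt | hgt
  · -- x < ql
    set m := (x + E.ql) / 2 with hm
    have hm1 : x < m := by simp only [hm]; linarith
    have hm2 : m < E.ql := by simp only [hm]; linarith
    have hmm : m ∈ Icc (0:ℝ) E.qbar := ⟨by linarith [hx.1], by linarith [hql.2]⟩
    have hPm : E.θu < E.Pl m := by
      have := E.Pl_anti hmm hql hm2
      rwa [hPlql] at this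
    have h1 : (m - x) * E.Pl m ≤ ∫ s in x..m, E.Pl s :=
      Pint_ge hqb E.Pl_cont hanti hx hmm hm1.le
    have h2 : (E.ql - m) * E.Pl E.ql ≤ ∫ s in m..E.ql, E.Pl s :=
      Pint_ge hqb E.Pl_cont hanti hmm hql hm2.le
    have hd1 := Vdiff hqb E.Pl_cont hx hmm
    have hd2 := Vdiff hqb E.Pl_cont hmm hql
    unfold Env.Gstar
    unfold Env.Vl at hd1 hd2 ⊢
    nlinarith
  · -- ql < x
    set m := (x + E.ql) / 2 with hm
    have hm1 : E.ql < m := by simp only [hm]; linarith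
    have hm2 : m < x := by simp only [hm]; linarith
    have hmm : m ∈ Icc (0:ℝ) E.qbar := ⟨by linarith [hql.1], by linarith [hx.2]⟩
    have hPm : E.Pl m < E.θu := by
      have := E.Pl_anti hql hmm hm1
      rwa [hPlql] at this
    have h1 : (∫ s in E.ql..m, E.Pl s) ≤ (m - E.ql) * E.Pl E.ql :=
      Pint_le hqb E.Pl_cont hanti hql hmm hm1.le
    have h2 : (∫ s in m..x, E.Pl s) ≤ (x - m) * E.Pl m :=
      Pint_le hqb E.Pl_cont hanti hmm hx hm2.le
    have hd1 := Vdiff hqb E.Pl_cont hql hmm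
    have hd2 := Vdiff hqb E.Pl_cont hmm hx
    unfold Env.Gstar
    unfold Env.Vl at hd1 hd2 ⊢
    nlinarith

theorem h_le_Gstar {x : ℝ} (hx : x ∈ Icc (0:ℝ) E.qbar) :
    E.Vl x - E.θu * x ≤ E.Gstar := by
  by_cases h : x = E.ql
  · subst h; unfold Env.Gstar; exact le_rfl
  · exact (h_lt_Gstar E hx h).le

variable {E} (Mo : Model E)

theorem Ps_qbar_le : Mo.Pstar E.qbar ≤ E.θl := by
  by_contra h
  push_neg at h
  have h2 := Mo.Dstar_low E.θl h
  have := Mo.Dstar_lt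
  rw [h2] at this
  exact lt_irrefl _ this

theorem fstar_int : IntervalIntegrable Mo.fstar volume E.θl E.θu := by
  by_contra h
  have h0 := intervalIntegral.integral_undef h
  have h1 := Mo.Fstar_ac E.θu (thu_mem E)
  rw [Mo.Fstar_u, h0] at h1
  exact one_ne_zero h1

theorem Fstar_nonneg {θ : ℝ} (hθ : θ ∈ E.Θ) : 0 ≤ Mo.Fstar θ := by
  rw [Mo.Fstar_ac θ hθ]
  refine intervalIntegral.integral_nonneg hθ.1 (fun u hu => ?_)
  exact (Mo.fstar_pos u ⟨hu.1, le_trans hu.2 hθ.2⟩).le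

theorem zstar_ge {θ : ℝ} (hθ : θ ∈ E.Θ) : θ ≤ Mo.zstar θ := by
  unfold Model.zstar
  have := div_nonneg (Fstar_nonneg Mo hθ) (Mo.fstar_pos θ hθ).le
  linarith

theorem Ps_qbar_le_z {θ : ℝ} (hθ : θ ∈ E.Θ) : Mo.Pstar E.qbar ≤ Mo.zstar θ :=
  le_trans (Ps_qbar_le Mo) (le_trans hθ.1 (zstar_ge Mo hθ))

theorem qBM_mem {θ : ℝ} (hθ : θ ∈ E.Θ) : Mo.qBM θ ∈ Icc (0:ℝ) E.qbar := by
  rcases le_or_gt (Mo.zstar θ) (Mo.Pstar 0) with h | h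
  · exact (Mo.Dstar_inv _ (Ps_qbar_le_z Mo hθ) h).1
  · unfold Model.qBM
    rw [Mo.Dstar_high _ h]
    exact ⟨le_rfl, E.qbar_pos.le⟩

theorem qBM_inv {θ : ℝ} (hθ : θ ∈ E.Θ) (h : Mo.zstar θ ≤ Mo.Pstar 0) :
    Mo.Pstar (Mo.qBM θ) = Mo.zstar θ :=
  (Mo.Dstar_inv _ (Ps_qbar_le_z Mo hθ) h).2

/-- Key comparison: `P* s ≤ z*(θ)` for `s ≥ q^BM(θ)`. -/
theorem Ps_le_z {θ s : ℝ} (hθ : θ ∈ E.Θ) (hs : s ∈ Icc (0:ℝ) E.qbar)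
    (hge : Mo.qBM θ ≤ s) : Mo.Pstar s ≤ Mo.zstar θ := by
  rcases le_or_gt (Mo.zstar θ) (Mo.Pstar 0) with h | h
  · rw [← qBM_inv Mo hθ h]
    exact Mo.Pstar_anti.antitoneOn (qBM_mem Mo hθ) hs hge
  · exact le_trans (Mo.Pstar_anti.antitoneOn ⟨le_rfl, E.qbar_pos.le⟩ hs hs.1) h.le

theorem Ps_lt_z {θ s : ℝ} (hθ : θ ∈ E.Θ) (hs : s ∈ Icc (0:ℝ) E.qbar)
    (hgt : Mo.qBM θ < s) : Mo.Pstar s < Mo.zstar θ := by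
  rcases le_or_gt (Mo.zstar θ) (Mo.Pstar 0) with h | h
  · rw [← qBM_inv Mo hθ h]
    exact Mo.Pstar_anti (qBM_mem Mo hθ) hs hgt
  · exact lt_of_le_of_lt (Mo.Pstar_anti.antitoneOn ⟨le_rfl, E.qbar_pos.le⟩ hs hs.1) h

theorem qBM_anti : AntitoneOn Mo.qBM E.Θ := by
  intro a ha b hb hab
  rcases eq_or_lt_of_le hab with rfl | hlt
  · exact le_rfl
  have hz : Mo.zstar a < Mo.zstar b := Mo.zstar_mono ha hb hlt
  by_contra hcon
  push_neg at hcon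
  have := Ps_lt_z Mo ha (qBM_mem Mo hb) hcon
  rcases le_or_gt (Mo.zstar b) (Mo.Pstar 0) with h | h
  · rw [qBM_inv Mo hb h] at this
    linarith
  · unfold Model.qBM at hcon
    rw [Mo.Dstar_high _ h] at hcon
    exact absurd hcon (not_lt.mpr (qBM_mem Mo ha).1)

/-! ### Schedule-level lemmas -/

theorem Theta_eq (E : Env) : E.Θ = Icc E.θl E.θu := rfl

theorem sched_int {E : Env} {q : ℝ → ℝ} (hq : E.IsSchedule q) {x y : ℝ}
    (hx : x ∈ E.Θ) (hy : y ∈ E.Θ) : IntervalIntegrable q volume x y :=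
  (hq.1.mono (uIcc_subset_Icc hx hy)).intervalIntegrable

theorem feas_top {E : Env} {q : ℝ → ℝ} (hq : E.FeasibleROPT q) : q E.θu = E.ql := by
  have h := hq.2 E.θu (thu_mem E)
  unfold Env.Wl at h
  rw [intervalIntegral.integral_same] at h
  by_contra hne
  have := h_lt_Gstar E (hq.1.2 E.θu (thu_mem E)) hne
  linarith

theorem feas_ge {E : Env} {q : ℝ → ℝ} (hq : E.FeasibleROPT q) {θ : ℝ} (hθ : θ ∈ E.Θ) :
    E.ql ≤ q θ := by
  rw [← feas_top hq]
  exact hq.1.1 hθ (thu_mem E) hθ.2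

/-! ### Clamps, measurability, integrability of the objective integrand -/

def clampI (E : Env) (y : ℝ) : ℝ := max E.θl (min y E.θu)

theorem clampI_mem (E : Env) (y : ℝ) : clampI E y ∈ E.Θ :=
  ⟨le_max_left _ _, max_le (E.θlu.le) (min_le_right _ _)⟩

theorem clampI_eq (E : Env) {y : ℝ} (hy : y ∈ E.Θ) : clampI E y = y := by
  unfold clampI
  rw [min_eq_left hy.2, max_eq_right hy.1]

theorem clampI_mono (E : Env) : Monotone (clampI E) := fun a b hab =>
  max_le_max le_rfl (min_le_min hab le_rfl)

def clampQ (E : Env) (x : ℝ) : ℝ := max 0 (min x E.qbar)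

theorem clampQ_mem (E : Env) (x : ℝ) : clampQ E x ∈ Icc (0:ℝ) E.qbar :=
  ⟨le_max_left _ _, max_le (E.qbar_pos.le) (min_le_right _ _)⟩

theorem clampQ_eq (E : Env) {x : ℝ} (hx : x ∈ Icc (0:ℝ) E.qbar) : clampQ E x = x := by
  unfold clampQ
  rw [min_eq_left hx.2, max_eq_right hx.1]

theorem clampQ_cont (E : Env) : Continuous (clampQ E) :=
  continuous_const.max (continuous_id.min continuous_const)

theorem bound_of_continuousOn {f : ℝ → ℝ} {s : Set ℝ} (hs : IsCompact s) (hne : s.Nonempty)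
    (hf : ContinuousOn f s) : ∃ C, ∀ x ∈ s, |f x| ≤ C := by
  obtain ⟨x0, _, hmax⟩ := hs.exists_isMaxOn hne hf.abs
  exact ⟨|f x0|, fun x hx => hmax hx⟩

theorem Vstar_contOn {E : Env} (Mo : Model E) :
    ContinuousOn Mo.Vstar (Icc (0:ℝ) E.qbar) :=
  VcontOn E.qbar_pos.le Mo.Pstar_cont

theorem zstar_contOn {E : Env} (Mo : Model E) : ContinuousOn Mo.zstar E.Θ := Mo.zstar_cont

/-- The clamped objective integrand without the density. -/
def gObj {E : Env} (Mo : Model E) (q : ℝ → ℝ) (θ : ℝ) : ℝ :=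
  Mo.Vstar (clampQ E (q (clampI E θ))) - Mo.zstar (clampI E θ) * clampQ E (q (clampI E θ))

theorem gObj_eq {E : Env} (Mo : Model E) {q : ℝ → ℝ} (hq : E.IsSchedule q) {θ : ℝ}
    (hθ : θ ∈ E.Θ) : gObj Mo q θ = Mo.Vstar (q θ) - Mo.zstar θ * q θ := by
  unfold gObj
  rw [clampI_eq E hθ, clampQ_eq E (hq.2 θ hθ)]

theorem gObj_meas {E : Env} (Mo : Model E) {q : ℝ → ℝ} (hq : E.IsSchedule q) :
    Measurable (gObj Mo q) := by
  have hqm : Measurable (fun θ => clampQ E (q (clampI E θ))) := by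
    have hanti : Antitone (fun θ => clampQ E (q (clampI E θ))) := by
      intro a b hab
      have h1 := clampI_mono E hab
      have h2 := hq.1 (clampI_mem E a) (clampI_mem E b) h1
      exact max_le_max le_rfl (min_le_min h2 le_rfl)
    exact hanti.measurable
  have hVc : Continuous (fun x : ℝ => Mo.Vstar (clampQ E x)) :=
    (Vstar_contOn Mo).comp_continuous (clampQ_cont E) (clampQ_mem E)
  have hzc : Continuous (fun θ : ℝ => Mo.zstar (clampI E θ)) := by
    refine (zstar_contOn Mo).comp_continuous ?_ (clampI_mem E)
    exact continuous_const.max (continuous_id.min continuous_const)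
  have h1 : Measurable (fun θ => Mo.Vstar (clampQ E (clampQ E (q (clampI E θ))))) :=
    hVc.measurable.comp hqm
  have h1' : (fun θ => Mo.Vstar (clampQ E (clampQ E (q (clampI E θ)))))
      = fun θ => Mo.Vstar (clampQ E (q (clampI E θ))) := by
    funext θ
    rw [clampQ_eq E (clampQ_mem E _)]
  rw [h1'] at h1
  exact h1.sub (hzc.measurable.mul hqm)

theorem gObj_bdd {E : Env} (Mo : Model E) (q : ℝ → ℝ) :
    ∃ C, ∀ θ, ‖gObj Mo q θ‖ ≤ C := by
  obtain ⟨C1, hC1⟩ := bound_of_continuousOn (isCompact_Icc) ⟨0, le_rfl, E.qbar_pos.le⟩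
    (Vstar_contOn Mo)
  obtain ⟨C2, hC2⟩ := bound_of_continuousOn (isCompact_Icc) ⟨E.θl, le_rfl, E.θlu.le⟩
    (zstar_contOn Mo)
  refine ⟨C1 + C2 * E.qbar, fun θ => ?_⟩
  have h1 := hC1 _ (clampQ_mem E (q (clampI E θ)))
  have h2 := hC2 _ (clampI_mem E θ)
  have h3 := clampQ_mem E (q (clampI E θ))
  have hC2' : 0 ≤ C2 := le_trans (abs_nonneg _) h2
  unfold gObj
  rw [Real.norm_eq_abs]
  have : |Mo.zstar (clampI E θ) * clampQ E (q (clampI E θ))| ≤ C2 * E.qbar := by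
    rw [abs_mul]
    refine mul_le_mul h2 ?_ (abs_nonneg _) hC2'
    rw [abs_of_nonneg h3.1]
    exact h3.2
  calc |_| ≤ |Mo.Vstar (clampQ E (q (clampI E θ)))|
      + |Mo.zstar (clampI E θ) * clampQ E (q (clampI E θ))| := abs_sub _ _
    _ ≤ C1 + C2 * E.qbar := add_le_add h1 this

/-- Integrability of the objective integrand of (ROPT) for any schedule. -/
theorem Jint {E : Env} (Mo : Model E) {q : ℝ → ℝ} (hq : E.IsSchedule q) :
    IntervalIntegrable (fun θ => (Mo.Vstar (q θ) - Mo.zstar θ * q θ) * Mo.fstar θ)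
      volume E.θl E.θu := by
  rw [intervalIntegrable_iff_integrableOn_Ioc_of_le E.θlu.le]
  have hf : IntegrableOn Mo.fstar (Ioc E.θl E.θu) volume := by
    have := (fstar_int Mo)
    rwa [intervalIntegrable_iff_integrableOn_Ioc_of_le E.θlu.le] at this
  have hprod : IntegrableOn (fun θ => gObj Mo q θ * Mo.fstar θ) (Ioc E.θl E.θu) volume := by
    refine Integrable.bdd_mul (c := (gObj_bdd Mo q).choose) hf ((gObj_meas Mo hq).aestronglyMeasurable) ?_
    exact Filter.Eventually.of_forall (gObj_bdd Mo q).choose_spec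
  refine hprod.congr_fun (fun θ hθ => ?_) measurableSet_Ioc
  simp only [gObj_eq Mo hq ⟨hθ.1.le, hθ.2⟩]

/-! ### theta-star lemmas and quantitative bound -/

theorem thetaStar_mem {E : Env} {Mo : Model E} {θs : ℝ} (hθs : Mo.IsThetaStar θs) :
    θs ∈ E.Θ := by
  rcases hθs with ⟨_, hmem, _⟩ | ⟨_, rfl⟩
  · exact hmem
  · exact thu_mem E

theorem qBM_ge_ql {E : Env} (Mo : Model E) {θs : ℝ} (hθs : Mo.IsThetaStar θs)
    {θ : ℝ} (hθ : θ ∈ E.Θ) (hle : θ ≤ θs) : E.ql ≤ Mo.qBM θ := by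
  rcases hθs with ⟨_, hmem, heq⟩ | ⟨hge, rfl⟩
  · rw [← heq]
    exact qBM_anti Mo hθ hmem hle
  · exact le_trans hge (qBM_anti Mo hθ (thu_mem E) hθ.2)

/-- Quantitative version of `h_lt_Gstar`, uniform over `x ≥ cc > ql`. -/
theorem h_bound_above {E : Env} {cc : ℝ} (hc : cc ∈ Icc (0:ℝ) E.qbar) (hgt : E.ql < cc) :
    ∃ m > 0, ∀ x ∈ Icc (0:ℝ) E.qbar, cc ≤ x → E.Vl x - E.θu * x ≤ E.Gstar - m := by
  have hqb : (0:ℝ) ≤ E.qbar := E.qbar_pos.le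
  have hql := ql_mem E
  have hPlql := Pl_ql E
  have hanti := E.Pl_anti.antitoneOn
  set mid := (E.ql + cc) / 2 with hmid
  have hm1 : E.ql < mid := by simp only [hmid]; linarith
  have hm2 : mid < cc := by simp only [hmid]; linarith
  have hmm : mid ∈ Icc (0:ℝ) E.qbar := ⟨by linarith [hql.1], by linarith [hc.2]⟩
  have hPm : E.Pl mid < E.θu := by
    have := E.Pl_anti hql hmm hm1
    rwa [hPlql] at this
  refine ⟨(cc - mid) * (E.θu - E.Pl mid), by nlinarith, fun x hx hcx => ?_⟩
  have h1 : (∫ s in E.ql..mid, E.Pl s) ≤ (mid - E.ql) * E.Pl E.ql :=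
    Pint_le hqb E.Pl_cont hanti hql hmm hm1.le
  have h2 : (∫ s in mid..cc, E.Pl s) ≤ (cc - mid) * E.Pl mid :=
    Pint_le hqb E.Pl_cont hanti hmm hc hm2.le
  have h3 : (∫ s in cc..x, E.Pl s) ≤ (x - cc) * E.Pl cc := Pint_le hqb E.Pl_cont hanti hc hx hcx
  have hPcc : E.Pl cc ≤ E.θu := by
    have := hanti hql hc hgt.le
    rwa [hPlql] at this
  have hd1 := Vdiff hqb E.Pl_cont hql hmm
  have hd2 := Vdiff hqb E.Pl_cont hmm hc
  have hd3 := Vdiff hqb E.Pl_cont hc hx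
  unfold Env.Gstar
  unfold Env.Vl at hd1 hd2 hd3 ⊢
  nlinarith [sub_nonneg.mpr hcx]

/-! ### Part A : a.e. downward adjustment below `q^BM` on `(θl, θ*)` -/

set_option maxHeartbeats 1000000 in
theorem partA {E : Env} (Mo : Model E) {θs : ℝ} (hθs : Mo.IsThetaStar θs)
    {q : ℝ → ℝ} (hOPT : Mo.SolvesROPT q) :
    volume {θ | θ ∈ Ioo E.θl θs ∧ Mo.qBM θ < q θ} = 0 := by
  classical
  by_contra hA
  -- reduce to a rational level set of positive measure
  have hsub : {θ | θ ∈ Ioo E.θl θs ∧ Mo.qBM θ < q θ} ⊆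
      ⋃ r : ℚ, {θ | θ ∈ Ioo E.θl θs ∧ Mo.qBM θ < (r:ℝ) ∧ (r:ℝ) < q θ} := by
    intro θ ⟨h1, h2⟩
    obtain ⟨r, hr1, hr2⟩ := exists_rat_btwn h2
    exact mem_iUnion.mpr ⟨r, h1, hr1, hr2⟩
  have hex : ∃ r : ℚ, volume {θ | θ ∈ Ioo E.θl θs ∧ Mo.qBM θ < (r:ℝ) ∧ (r:ℝ) < q θ} ≠ 0 := by
    by_contra hall
    push_neg at hall
    exact hA (le_antisymm (le_trans (measure_mono hsub)
      (le_of_eq (measure_iUnion_null hall))) (zero_le))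
  obtain ⟨r, hAc⟩ := hex
  set c : ℝ := (r : ℝ) with hcdef
  set Ac := {θ | θ ∈ Ioo E.θl θs ∧ Mo.qBM θ < c ∧ c < q θ} with hAcdef
  obtain ⟨θh, hθh⟩ := nonempty_of_measure_ne_zero hAc
  obtain ⟨hθhI, hθhBM, hθhq⟩ := hθh
  have hfeas := hOPT.1
  have hanti : AntitoneOn q E.Θ := hfeas.1.1
  have hbox : ∀ θ ∈ E.Θ, q θ ∈ Icc (0:ℝ) E.qbar := hfeas.1.2
  have hcons : ∀ θ ∈ E.Θ, E.Gstar ≤ E.Wl q θ := hfeas.2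
  have hθsΘ := thetaStar_mem hθs
  have hθhΘ : θh ∈ E.Θ := ⟨hθhI.1.le, le_trans hθhI.2.le hθsΘ.2⟩
  -- basic facts about c
  have hqlc : E.ql < c := lt_of_le_of_lt (qBM_ge_ql Mo hθs hθhΘ hθhI.2.le) hθhBM
  have hc0 : 0 < c := lt_of_le_of_lt (ql_mem E).1 hqlc
  have hcqbar : c < E.qbar := lt_of_lt_of_le hθhq (hbox θh hθhΘ).2
  have hcmem : c ∈ Icc (0:ℝ) E.qbar := ⟨hc0.le, hcqbar.le⟩
  -- the crossing point β
  set S := {y | y ∈ E.Θ ∧ c < q y} with hSdef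
  have hSne : S.Nonempty := ⟨θh, hθhΘ, hθhq⟩
  have hSbdd : BddAbove S := ⟨E.θu, fun y hy => hy.1.2⟩
  set β := sSup S with hβdef
  have hβmem : β ∈ E.Θ :=
    ⟨le_trans hθhΘ.1 (le_csSup hSbdd ⟨hθhΘ, hθhq⟩), csSup_le hSne (fun y hy => hy.1.2)⟩
  have hS_le : ∀ y ∈ E.Θ, β < y → q y ≤ c := by
    intro y hy hβy
    by_contra hcon
    push_neg at hcon
    exact absurd (le_csSup hSbdd ⟨hy, hcon⟩) (not_le.mpr hβy)
  have hq_gt : ∀ z ∈ E.Θ, z < β → c < q z := by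
    intro z hz hzβ
    obtain ⟨y, hyS, hzy⟩ := exists_lt_of_lt_csSup hSne hzβ
    exact lt_of_lt_of_le hyS.2 (hanti hz hyS.1 hzy.le)
  -- β < θu
  have hβlt : β < E.θu := by
    rcases lt_or_eq_of_le hβmem.2 with h | h
    · exact h
    exfalso
    obtain ⟨m, hm, hmb⟩ := h_bound_above hcmem hqlc
    have hε : 0 < m / (3 * E.qbar + 1) := div_pos hm (by linarith [E.qbar_pos])
    have : E.θu - m / (3 * E.qbar + 1) < β := by rw [h]; linarith
    obtain ⟨y, hyS, hylt⟩ := exists_lt_of_lt_csSup hSne this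
    have hyΘ := hyS.1
    have hcy := hcons y hyΘ
    unfold Env.Wl at hcy
    have hKb : (∫ t in y..E.θu, q t) ≥ 0 :=
      intervalIntegral.integral_nonneg hyΘ.2 (fun u hu => (hbox u ⟨le_trans hyΘ.1 hu.1, hu.2⟩).1)
    have hqy := hbox y hyΘ
    have hVb := hmb (q y) hqy (le_of_lt hyS.2)
    have hd : E.θu - y < m / (3 * E.qbar + 1) := by linarith [hyΘ.2]
    have hq_le : q y ≤ E.qbar := hqy.2
    have hDq : m / (3 * E.qbar + 1) * E.qbar < m := by
      rw [div_mul_eq_mul_div, div_lt_iff₀ (by linarith [E.qbar_pos] : (0:ℝ) < 3 * E.qbar + 1)]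
      nlinarith [E.qbar_pos]
    nlinarith [mul_le_mul_of_nonneg_left hq_le (sub_nonneg.mpr hyΘ.2),
      mul_le_mul_of_nonneg_right (le_of_lt hd) E.qbar_pos.le]
  -- the anchor inequality at β
  have hKint : ∀ x ∈ E.Θ, ∀ y ∈ E.Θ, IntervalIntegrable q volume x y :=
    fun x hx y hy => sched_int hfeas.1 hx hy
  have hanchor : E.Gstar + (∫ t in β..E.θu, q t) ≤ E.Vl c - β * c := by
    by_contra hcon
    push_neg at hcon
    obtain ⟨ε, hε, hqbarε⟩ : ∃ ε, 0 < ε ∧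
        E.qbar * ε < E.Gstar + (∫ t in β..E.θu, q t) - (E.Vl c - β * c) := by
      refine ⟨(E.Gstar + (∫ t in β..E.θu, q t) - (E.Vl c - β * c)) / (E.qbar + 1),
        div_pos (by linarith) (by linarith [E.qbar_pos]), ?_⟩
      rw [mul_div_assoc', div_lt_iff₀ (by linarith [E.qbar_pos] : (0:ℝ) < E.qbar + 1)]
      nlinarith [E.qbar_pos]
    -- upper anchor x̄ = q y' with y' ∈ S, y' > β - ε
    obtain ⟨y', hy'S, hy'gt⟩ := exists_lt_of_lt_csSup hSne (by linarith : β - ε < β)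
    have hy'Θ : y' ∈ E.Θ := hy'S.1
    have hy'β : y' ≤ β := le_csSup hSbdd hy'S
    have hsplit1 : (∫ t in y'..β, q t) + (∫ t in β..E.θu, q t) = ∫ t in y'..E.θu, q t :=
      intervalIntegral.integral_add_adjacent_intervals (hKint y' hy'Θ β hβmem)
        (hKint β hβmem E.θu (thu_mem E))
    have hmid_nonneg : 0 ≤ ∫ t in y'..β, q t :=
      intervalIntegral.integral_nonneg hy'β
        (fun u hu => (hbox u ⟨le_trans hy'Θ.1 hu.1, le_trans hu.2 hβmem.2⟩).1)
    have hcy' := hcons y' hy'Θ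
    unfold Env.Wl at hcy'
    have hxbar := hbox y' hy'Θ
    have hup : E.Gstar + (∫ t in β..E.θu, q t) - E.qbar * ε ≤ E.Vl (q y') - β * (q y') := by
      have h1 : (β - y') * q y' ≤ (β - y') * E.qbar :=
        mul_le_mul_of_nonneg_left hxbar.2 (by linarith)
      have h2 : (β - y') * E.qbar ≤ ε * E.qbar :=
        mul_le_mul_of_nonneg_right (by linarith) E.qbar_pos.le
      nlinarith [hcy', hsplit1, hmid_nonneg]
    -- lower anchor w = q y with y ∈ (β, θu], y - β ≤ ε
    obtain ⟨y, hyβ, hyΘ, hyε⟩ : ∃ y, β < y ∧ y ∈ E.Θ ∧ y - β ≤ ε := by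
      refine ⟨β + min ε ((E.θu - β) / 2), ?_, ⟨?_, ?_⟩, ?_⟩
      · have : 0 < min ε ((E.θu - β) / 2) := lt_min hε (by linarith)
        linarith
      · have : 0 < min ε ((E.θu - β) / 2) := lt_min hε (by linarith)
        linarith [hβmem.1]
      · have : min ε ((E.θu - β) / 2) ≤ (E.θu - β) / 2 := min_le_right _ _
        linarith
      · have : min ε ((E.θu - β) / 2) ≤ ε := min_le_left _ _
        linarith
    have hw_le : q y ≤ c := hS_le y hyΘ hyβ
    have hsplit2 : (∫ t in β..y, q t) + (∫ t in y..E.θu, q t) = ∫ t in β..E.θu, q t :=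
      intervalIntegral.integral_add_adjacent_intervals (hKint β hβmem y hyΘ)
        (hKint y hyΘ E.θu (thu_mem E))
    have hmid_le : (∫ t in β..y, q t) ≤ (y - β) * E.qbar := by
      have := intervalIntegral.integral_mono_on hyβ.le (hKint β hβmem y hyΘ)
        intervalIntegrable_const
        (fun u hu => (hbox u ⟨le_trans hβmem.1 hu.1, le_trans hu.2 hyΘ.2⟩).2)
      simpa [smul_eq_mul, mul_comm] using this
    have hcy2 := hcons y hyΘ
    unfold Env.Wl at hcy2
    have hwmem := hbox y hyΘ
    have hlow : E.Gstar + (∫ t in β..E.θu, q t) - E.qbar * ε ≤ E.Vl (q y) - β * (q y) := by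
      have h1 : (y - β) * E.qbar ≤ ε * E.qbar :=
        mul_le_mul_of_nonneg_right hyε E.qbar_pos.le
      have h2 : 0 ≤ (y - β) * q y := mul_nonneg (by linarith) hwmem.1
      nlinarith [hcy2, hsplit2]
    -- unimodality gives a contradiction
    have huni : E.Gstar + (∫ t in β..E.θu, q t) - E.qbar * ε ≤ E.Vl c - β * c :=
      unimodal E.qbar_pos.le E.Pl_cont E.Pl_anti.antitoneOn hwmem hcmem hxbar
        hw_le (le_of_lt hy'S.2) hlow hup
    linarith
  -- the threshold α below which we do not chop
  set T := {y | y ∈ E.Θ ∧ Mo.qBM y ≤ c} with hTdef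
  have hTne : T.Nonempty := ⟨θh, hθhΘ, hθhBM.le⟩
  have hTbdd : BddBelow T := ⟨E.θl, fun y hy => hy.1.1⟩
  set α := sInf T with hαdef
  have hT_le : ∀ z ∈ E.Θ, α < z → Mo.qBM z ≤ c := by
    intro z hz hαz
    obtain ⟨y, hyT, hyz⟩ := exists_lt_of_csInf_lt hTne hαz
    exact le_trans (qBM_anti Mo hyT.1 hz hyz.le) hyT.2
  -- the chopped schedule
  set q2 := fun y => if α ≤ y then min (q y) c else q y with hq2def
  have hq2_le : ∀ y, q2 y ≤ q y := by
    intro y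
    simp only [hq2def]
    by_cases h1 : α ≤ y
    · rw [if_pos h1]; exact min_le_left _ _
    · rw [if_neg h1]
  have hq2_lec : ∀ y, α ≤ y → q2 y ≤ c := by
    intro y hy
    simp only [hq2def, if_pos hy]
    exact min_le_right _ _
  have hsch2 : E.IsSchedule q2 := by
    constructor
    · intro a ha b hb hab
      simp only [hq2def]
      by_cases h1 : α ≤ a
      · rw [if_pos h1, if_pos (le_trans h1 hab)]
        exact min_le_min (hanti ha hb hab) le_rfl
      · rw [if_neg h1]
        by_cases h2 : α ≤ b
        · rw [if_pos h2]
          exact le_trans (min_le_left _ _) (hanti ha hb hab)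
        · rw [if_neg h2]
          exact hanti ha hb hab
    · intro θ hθ
      simp only [hq2def]
      by_cases h1 : α ≤ θ
      · rw [if_pos h1]
        exact ⟨le_min (hbox θ hθ).1 hc0.le, le_trans (min_le_left _ _) (hbox θ hθ).2⟩
      · rw [if_neg h1]
        exact hbox θ hθ
  have hint2 : ∀ x ∈ E.Θ, ∀ y ∈ E.Θ, IntervalIntegrable q2 volume x y :=
    fun x hx y hy => sched_int hsch2 hx hy
  have hK2le : ∀ θ ∈ E.Θ, (∫ t in θ..E.θu, q2 t) ≤ ∫ t in θ..E.θu, q t := fun θ hθ =>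
    intervalIntegral.integral_mono_on hθ.2 (hint2 θ hθ _ (thu_mem E))
      (hKint θ hθ _ (thu_mem E)) (fun u _ => hq2_le u)
  have hfeas2 : E.FeasibleROPT q2 := by
    refine ⟨hsch2, fun θ hθ => ?_⟩
    by_cases hred : α ≤ θ ∧ c < q θ
    · have hq2θ : q2 θ = c := by
        simp only [hq2def, if_pos hred.1]
        exact min_eq_right hred.2.le
      have hθβ : θ ≤ β := le_csSup hSbdd ⟨hθ, hred.2⟩
      have hsplit : (∫ t in θ..β, q2 t) + (∫ t in β..E.θu, q2 t) = ∫ t in θ..E.θu, q2 t :=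
        intervalIntegral.integral_add_adjacent_intervals (hint2 θ hθ β hβmem)
          (hint2 β hβmem _ (thu_mem E))
      have h1 : (∫ t in θ..β, q2 t) ≤ (β - θ) * c := by
        have := intervalIntegral.integral_mono_on hθβ (hint2 θ hθ β hβmem)
          intervalIntegrable_const (fun u hu => hq2_lec u (le_trans hred.1 hu.1))
        simpa [smul_eq_mul, mul_comm] using this
      have h2 : (∫ t in β..E.θu, q2 t) ≤ ∫ t in β..E.θu, q t := hK2le β hβmem
      unfold Env.Wl
      rw [hq2θ]
      nlinarith [hanchor, hsplit]
    · have hq2θ : q2 θ = q θ := by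
        by_cases h1 : α ≤ θ
        · have h2 : q θ ≤ c := by
            by_contra h3
            exact hred ⟨h1, lt_of_not_ge h3⟩
          simp only [hq2def, if_pos h1]
          exact min_eq_left h2
        · simp only [hq2def, if_neg h1]
      have := hcons θ hθ
      unfold Env.Wl at this ⊢
      rw [hq2θ]
      linarith [hK2le θ hθ]
  -- pointwise comparison of the objective integrands
  have hqbar0 : (0:ℝ) ≤ E.qbar := E.qbar_pos.le
  have hpt : ∀ θ ∈ E.Θ, θ ≠ α →
      (Mo.Vstar (q θ) - Mo.zstar θ * q θ) * Mo.fstar θ ≤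
      (Mo.Vstar (q2 θ) - Mo.zstar θ * q2 θ) * Mo.fstar θ := by
    intro θ hθ hθα
    by_cases heq : q2 θ = q θ
    · rw [heq]
    · have h1 : α ≤ θ := by
        by_contra h1
        exact heq (by simp only [hq2def, if_neg h1])
      have h2 : c < q θ := by
        by_contra h2
        exact heq (by simp only [hq2def, if_pos h1]; exact min_eq_left (not_lt.mp h2))
      have hq2θ : q2 θ = c := by
        simp only [hq2def, if_pos h1]
        exact min_eq_right h2.le
      have hαθ : α < θ := lt_of_le_of_ne h1 (Ne.symm hθα)
      have hBMc : Mo.qBM θ ≤ c := hT_le θ hθ hαθ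
      have hqθ := hbox θ hθ
      have hd : Mo.Vstar (q θ) - Mo.Vstar c = ∫ s in c..q θ, Mo.Pstar s :=
        Vdiff hqbar0 Mo.Pstar_cont hcmem hqθ
      have hb1 : (∫ s in c..q θ, Mo.Pstar s) ≤ (q θ - c) * Mo.Pstar c :=
        Pint_le hqbar0 Mo.Pstar_cont Mo.Pstar_anti.antitoneOn hcmem hqθ h2.le
      have hz : Mo.Pstar c ≤ Mo.zstar θ := Ps_le_z Mo hθ hcmem hBMc
      have hmain : Mo.Vstar (q θ) - Mo.zstar θ * q θ ≤ Mo.Vstar c - Mo.zstar θ * c := by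
        nlinarith [mul_le_mul_of_nonneg_left hz (sub_nonneg.mpr h2.le)]
      rw [hq2θ]
      exact mul_le_mul_of_nonneg_right hmain (Mo.fstar_pos θ hθ).le
  have hptstrict : ∀ θ ∈ Ac, θ ≠ α →
      (Mo.Vstar (q θ) - Mo.zstar θ * q θ) * Mo.fstar θ <
      (Mo.Vstar (q2 θ) - Mo.zstar θ * q2 θ) * Mo.fstar θ := by
    intro θ hθAc hθα
    obtain ⟨hθI, hθBM, hθq⟩ := hθAc
    have hθΘ : θ ∈ E.Θ := ⟨hθI.1.le, le_trans hθI.2.le hθsΘ.2⟩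
    have h1 : α ≤ θ := csInf_le hTbdd ⟨hθΘ, hθBM.le⟩
    have hq2θ : q2 θ = c := by
      simp only [hq2def, if_pos h1]
      exact min_eq_right hθq.le
    have hqθ := hbox θ hθΘ
    set mid := (c + q θ) / 2 with hmiddef
    have hm1 : c < mid := by simp only [hmiddef]; linarith
    have hm2 : mid < q θ := by simp only [hmiddef]; linarith
    have hmm : mid ∈ Icc (0:ℝ) E.qbar := ⟨by linarith [hc0], by linarith [hqθ.2]⟩
    have hd : Mo.Vstar (q θ) - Mo.Vstar c = ∫ s in c..q θ, Mo.Pstar s :=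
      Vdiff hqbar0 Mo.Pstar_cont hcmem hqθ
    have hsplit : (∫ s in c..mid, Mo.Pstar s) + (∫ s in mid..q θ, Mo.Pstar s)
        = ∫ s in c..q θ, Mo.Pstar s :=
      intervalIntegral.integral_add_adjacent_intervals
        (Pint hqbar0 Mo.Pstar_cont hcmem hmm) (Pint hqbar0 Mo.Pstar_cont hmm hqθ)
    have hb1 : (∫ s in c..mid, Mo.Pstar s) ≤ (mid - c) * Mo.Pstar c :=
      Pint_le hqbar0 Mo.Pstar_cont Mo.Pstar_anti.antitoneOn hcmem hmm hm1.le
    have hb2 : (∫ s in mid..q θ, Mo.Pstar s) ≤ (q θ - mid) * Mo.Pstar mid :=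
      Pint_le hqbar0 Mo.Pstar_cont Mo.Pstar_anti.antitoneOn hmm hqθ hm2.le
    have hz1 : Mo.Pstar c ≤ Mo.zstar θ := Ps_le_z Mo hθΘ hcmem hθBM.le
    have hz2 : Mo.Pstar mid < Mo.zstar θ :=
      Ps_lt_z Mo hθΘ hmm (lt_trans hθBM hm1)
    have hmain : Mo.Vstar (q θ) - Mo.zstar θ * q θ < Mo.Vstar c - Mo.zstar θ * c := by
      nlinarith [mul_le_mul_of_nonneg_left hz1 (sub_nonneg.mpr hm1.le),
        mul_lt_mul_of_pos_left hz2 (by linarith : (0:ℝ) < q θ - mid)]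
    rw [hq2θ]
    exact mul_lt_mul_of_pos_right hmain (Mo.fstar_pos θ hθΘ)
  -- integrate the comparison
  have hint_g1 := Jint Mo hfeas.1
  have hint_g2 := Jint Mo hsch2
  have hDint : IntervalIntegrable
      (fun θ => (Mo.Vstar (q2 θ) - Mo.zstar θ * q2 θ) * Mo.fstar θ
        - (Mo.Vstar (q θ) - Mo.zstar θ * q θ) * Mo.fstar θ) volume E.θl E.θu :=
    hint_g2.sub hint_g1
  have hae : 0 ≤ᵐ[volume.restrict (Set.uIoc E.θl E.θu)]
      (fun θ => (Mo.Vstar (q2 θ) - Mo.zstar θ * q2 θ) * Mo.fstar θ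
        - (Mo.Vstar (q θ) - Mo.zstar θ * q θ) * Mo.fstar θ) := by
    rw [Set.uIoc_of_le E.θlu.le]
    have h1 : ∀ᵐ θ ∂volume.restrict (Ioc E.θl E.θu), θ ∈ Ioc E.θl E.θu :=
      ae_restrict_mem measurableSet_Ioc
    have h2 : ∀ᵐ θ ∂volume.restrict (Ioc E.θl E.θu), θ ≠ α := by
      refine ae_iff.mpr ?_
      have he : {θ | ¬θ ≠ α} = {α} := by
        ext x
        simp [not_not]
      rw [he, Measure.restrict_apply (measurableSet_singleton α)]
      exact measure_mono_null (inter_subset_left) (Real.volume_singleton)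
    filter_upwards [h1, h2] with θ hθI hθα
    exact sub_nonneg.mpr (hpt θ ⟨hθI.1.le, hθI.2⟩ hθα)
  have hpos : 0 < ∫ θ in E.θl..E.θu,
      ((Mo.Vstar (q2 θ) - Mo.zstar θ * q2 θ) * Mo.fstar θ
        - (Mo.Vstar (q θ) - Mo.zstar θ * q θ) * Mo.fstar θ) := by
    rw [intervalIntegral.integral_pos_iff_support_of_nonneg_ae' hae hDint]
    refine ⟨E.θlu, ?_⟩
    have hsub2 : Ac \ {α} ⊆ Function.support
        (fun θ => (Mo.Vstar (q2 θ) - Mo.zstar θ * q2 θ) * Mo.fstar θ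
          - (Mo.Vstar (q θ) - Mo.zstar θ * q θ) * Mo.fstar θ) ∩ Ioc E.θl E.θu := by
      intro θ hθ
      have hθAc := hθ.1
      have hθα : θ ≠ α := hθ.2
      have hθΘ : θ ∈ E.Θ := ⟨hθAc.1.1.le, le_trans hθAc.1.2.le hθsΘ.2⟩
      refine ⟨?_, hθAc.1.1, hθΘ.2⟩
      have := hptstrict θ hθAc hθα
      simp only [Function.mem_support]
      intro h0
      rw [sub_eq_zero] at h0
      rw [h0] at this
      exact lt_irrefl _ this
    refine lt_of_lt_of_le ?_ (measure_mono hsub2)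
    rw [measure_diff_null (Real.volume_singleton)]
    exact (zero_le).lt_of_ne (Ne.symm hAc)
  have hJ : Mo.J q2 - Mo.J q = ∫ θ in E.θl..E.θu,
      ((Mo.Vstar (q2 θ) - Mo.zstar θ * q2 θ) * Mo.fstar θ
        - (Mo.Vstar (q θ) - Mo.zstar θ * q θ) * Mo.fstar θ) := by
    unfold Model.J
    rw [intervalIntegral.integral_sub hint_g2 hint_g1]
  have := hOPT.2 q2 hfeas2
  linarith

/-! ### Part B : pointwise bound `q ≤ q^BM` on `(θl, θ*)` -/

theorem partB {E : Env} (Mo : Model E) {θs : ℝ} (hθs : Mo.IsThetaStar θs)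
    {q : ℝ → ℝ} (hOPT : Mo.SolvesROPT q) :
    ∀ θ ∈ Ioo E.θl θs, q θ ≤ Mo.qBM θ := by
  intro θ0 hθ0
  by_contra hgt
  push_neg at hgt
  have hθsΘ := thetaStar_mem hθs
  have hθ0Θ : θ0 ∈ E.Θ := ⟨hθ0.1.le, le_trans hθ0.2.le hθsΘ.2⟩
  have hN := partA Mo hθs hOPT
  have hsmem : q θ0 ∈ Icc (0:ℝ) E.qbar := hOPT.1.1.2 θ0 hθ0Θ
  have hs0 : 0 < q θ0 := lt_of_le_of_lt (qBM_mem Mo hθ0Θ).1 hgt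
  -- every θ in (θl, θ0) has q θ0 ≤ qBM θ
  have hlow : ∀ θ ∈ Ioo E.θl θ0, q θ0 ≤ Mo.qBM θ := by
    intro θ hθ
    by_contra hcon
    push_neg at hcon
    have hθΘ : θ ∈ E.Θ := ⟨hθ.1.le, le_trans hθ.2.le hθ0Θ.2⟩
    have hsub : Ioo θ θ0 ⊆ {x | x ∈ Ioo E.θl θs ∧ Mo.qBM x < q x} := by
      intro x hx
      have hxΘ : x ∈ E.Θ := ⟨le_trans hθ.1.le hx.1.le, le_trans hx.2.le hθ0Θ.2⟩
      refine ⟨⟨lt_trans hθ.1 hx.1, lt_trans hx.2 hθ0.2⟩, ?_⟩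
      have h1 : Mo.qBM x ≤ Mo.qBM θ := qBM_anti Mo hθΘ hxΘ hx.1.le
      have h2 : q θ0 ≤ q x := hOPT.1.1.1 hxΘ hθ0Θ hx.2.le
      calc Mo.qBM x ≤ Mo.qBM θ := h1
        _ < q θ0 := hcon
        _ ≤ q x := h2
    have h0 : volume (Ioo θ θ0) = 0 := measure_mono_null hsub hN
    rw [Real.volume_Ioo] at h0
    rw [ENNReal.ofReal_eq_zero] at h0
    linarith [hθ.2]
  -- limit from the left: z*(θ0) ≤ P*(q θ0)
  have hcA : ContinuousAt Mo.zstar θ0 := by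
    refine (zstar_contOn Mo).continuousAt ?_
    rw [Theta_eq]
    exact Icc_mem_nhds hθ0.1 (lt_of_lt_of_le hθ0.2 hθsΘ.2)
  have hz_le : Mo.zstar θ0 ≤ Mo.Pstar (q θ0) := by
    have htend : Filter.Tendsto Mo.zstar (nhdsWithin θ0 (Iio θ0)) (nhds (Mo.zstar θ0)) :=
      hcA.tendsto.mono_left nhdsWithin_le_nhds
    refine le_of_tendsto htend ?_
    have hmem : Ioo E.θl θ0 ∈ nhdsWithin θ0 (Iio θ0) :=
      Ioo_mem_nhdsLT_of_mem ⟨hθ0.1, le_rfl⟩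
    filter_upwards [hmem] with θ hθ
    have hθΘ : θ ∈ E.Θ := ⟨hθ.1.le, le_trans hθ.2.le hθ0Θ.2⟩
    have h1 : q θ0 ≤ Mo.qBM θ := hlow θ hθ
    have hzle : Mo.zstar θ ≤ Mo.Pstar 0 := by
      by_contra hcon
      push_neg at hcon
      have : Mo.qBM θ = 0 := by
        unfold Model.qBM
        exact Mo.Dstar_high _ hcon
      rw [this] at h1
      linarith
    have hinv := qBM_inv Mo hθΘ hzle
    rw [← hinv]
    exact Mo.Pstar_anti.antitoneOn hsmem (qBM_mem Mo hθΘ) h1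
  rcases le_or_gt (Mo.zstar θ0) (Mo.Pstar 0) with hle | hlt
  · have hinv := qBM_inv Mo hθ0Θ hle
    have : Mo.Pstar (q θ0) < Mo.Pstar (Mo.qBM θ0) :=
      Mo.Pstar_anti (qBM_mem Mo hθ0Θ) hsmem hgt
    rw [hinv] at this
    linarith
  · have : Mo.Pstar (q θ0) ≤ Mo.Pstar 0 :=
      Mo.Pstar_anti.antitoneOn ⟨le_rfl, E.qbar_pos.le⟩ hsmem hsmem.1
    linarith

/-! ### `q*` basics and `θm < θ*` -/

theorem qstar_mem {E : Env} (Mo : Model E) {θ : ℝ} (hθ : θ ∈ E.Θ) :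
    Mo.qstar θ ∈ Icc (0:ℝ) E.qbar :=
  ⟨le_trans (ql_mem E).1 (le_max_right _ _), max_le (qBM_mem Mo hθ).2 (ql_mem E).2⟩

theorem qstar_anti {E : Env} (Mo : Model E) : AntitoneOn Mo.qstar E.Θ :=
  fun a ha b hb hab => max_le_max (qBM_anti Mo ha hb hab) le_rfl

theorem qstar_sched {E : Env} (Mo : Model E) : E.IsSchedule Mo.qstar :=
  ⟨qstar_anti Mo, fun θ hθ => qstar_mem Mo hθ⟩

theorem qstar_eq_qBM {E : Env} (Mo : Model E) {θs : ℝ} (hθs : Mo.IsThetaStar θs)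
    {θ : ℝ} (hθ : θ ∈ E.Θ) (hle : θ ≤ θs) : Mo.qstar θ = Mo.qBM θ :=
  max_eq_left (qBM_ge_ql Mo hθs hθ hle)

theorem qstar_eq_ql_case1 {E : Env} {Mo : Model E} {θs : ℝ}
    (h1 : Mo.qBM E.θu < E.ql ∧ θs ∈ E.Θ ∧ Mo.qBM θs = E.ql)
    {θ : ℝ} (hθ : θ ∈ E.Θ) (hge : θs ≤ θ) : Mo.qstar θ = E.ql := by
  have h : Mo.qBM θ ≤ E.ql := by
    rw [← h1.2.2]
    exact qBM_anti Mo h1.2.1 hθ hge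
  exact max_eq_right h

set_option maxHeartbeats 800000 in
theorem thetaM_lt {E : Env} (Mo : Model E) {θs θm : ℝ}
    (hviol : ∃ θ ∈ E.Θ, E.Wl Mo.qstar θ < E.Gstar)
    (hθs : Mo.IsThetaStar θs) (hθm : Mo.IsThetaM θm) : θm < θs := by
  obtain ⟨θv, hθvΘ, hθv⟩ := hviol
  have hmin : E.Wl Mo.qstar θm < E.Gstar := lt_of_le_of_lt (hθm.2.1 θv hθvΘ) hθv
  have hθmΘ := hθm.1
  rcases hθs with h1 | h2
  · -- case 1 : Wl q* = Gstar on [θ*, θu]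
    by_contra hcon
    push_neg at hcon
    have heq : E.Wl Mo.qstar θm = E.Gstar := by
      unfold Env.Wl
      have hq : Mo.qstar θm = E.ql := qstar_eq_ql_case1 h1 hθmΘ hcon
      have hK : (∫ y in θm..E.θu, Mo.qstar y) = (E.θu - θm) * E.ql := by
        rw [intervalIntegral.integral_congr (g := fun _ => E.ql) ?_]
        · simp [smul_eq_mul]
        · intro y hy
          rw [uIcc_of_le hθmΘ.2] at hy
          exact qstar_eq_ql_case1 h1 ⟨le_trans hθmΘ.1 hy.1, hy.2⟩ (le_trans hcon hy.1)
      rw [hq, hK]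
      unfold Env.Gstar
      ring
    linarith
  · -- case 2 : θ* = θu
    obtain ⟨hge, rfl⟩ := h2
    rcases lt_or_eq_of_le hθmΘ.2 with h | h
    · exact h
    exfalso
    have hqstaru : Mo.qstar E.θu = Mo.qBM E.θu := max_eq_left hge
    rcases eq_or_lt_of_le hge with hql_eq | hql_lt
    · -- qBM θu = ql : the constraint value at θu is exactly Gstar
      rw [h] at hmin
      unfold Env.Wl at hmin
      rw [intervalIntegral.integral_same, hqstaru, ← hql_eq] at hmin
      unfold Env.Gstar at hmin
      linarith
    · -- ql < qBM θu : θu is not a minimizer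
      have hv0mem := qBM_mem Mo (thu_mem E)
      have hPl_lt : E.Pl (Mo.qBM E.θu) < E.θu := by
        have := E.Pl_anti (ql_mem E) hv0mem hql_lt
        rwa [Pl_ql E] at this
      set δ := E.θu - E.Pl (Mo.qBM E.θu) with hδ
      have hδpos : 0 < δ := by simp only [hδ]; linarith
      set θ := max (E.θu - δ / 2) ((E.θl + E.θu) / 2) with hθdef
      have hθlt : θ < E.θu := by
        apply max_lt
        · linarith
        · linarith [E.θlu]
      have hθgt : E.θl < θ :=
        lt_of_lt_of_le (by linarith [E.θlu]) (le_max_right _ _)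
      have hθΘ : θ ∈ E.Θ := ⟨hθgt.le, hθlt.le⟩
      have hθδ : E.θu - δ < θ := lt_of_lt_of_le (by linarith) (le_max_left _ _)
      have hz_u : Mo.zstar E.θu ≤ Mo.Pstar 0 := by
        by_contra hcon2
        push_neg at hcon2
        have h0 : Mo.qBM E.θu = 0 := by
          unfold Model.qBM
          exact Mo.Dstar_high _ hcon2
        rw [h0] at hql_lt
        linarith [ql_pos E]
      have hzθ : Mo.zstar θ < Mo.zstar E.θu := Mo.zstar_mono hθΘ (thu_mem E) hθlt
      have hqBMgt : Mo.qBM E.θu < Mo.qBM θ := by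
        by_contra hcon2
        push_neg at hcon2
        have hi1 := qBM_inv Mo hθΘ (le_trans hzθ.le hz_u)
        have hi2 := qBM_inv Mo (thu_mem E) hz_u
        have hα := Mo.Pstar_anti.antitoneOn (qBM_mem Mo hθΘ) hv0mem hcon2
        rw [hi1, hi2] at hα
        linarith
      have hqstarθ : Mo.qstar θ = Mo.qBM θ :=
        max_eq_left (le_trans hge hqBMgt.le)
      -- integral lower bound
      have hK : (E.θu - θ) * Mo.qBM E.θu ≤ ∫ y in θ..E.θu, Mo.qstar y := by
        have hmono : ∀ u ∈ Icc θ E.θu, Mo.qBM E.θu ≤ Mo.qstar u := by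
          intro u hu
          have huΘ : u ∈ E.Θ := ⟨le_trans hθΘ.1 hu.1, hu.2⟩
          calc Mo.qBM E.θu = Mo.qstar E.θu := hqstaru.symm
            _ ≤ Mo.qstar u := qstar_anti Mo huΘ (thu_mem E) hu.2
        have := intervalIntegral.integral_mono_on hθlt.le intervalIntegrable_const
          (sched_int (qstar_sched Mo) hθΘ (thu_mem E)) hmono
        simpa [smul_eq_mul, mul_comm] using this
      -- value upper bound
      have hVd : E.Vl (Mo.qstar θ) - E.Vl (Mo.qBM E.θu)
          = ∫ s in Mo.qBM E.θu..Mo.qstar θ, E.Pl s :=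
        Vdiff E.qbar_pos.le E.Pl_cont hv0mem (qstar_mem Mo hθΘ)
      have hVb : (∫ s in Mo.qBM E.θu..Mo.qstar θ, E.Pl s)
          ≤ (Mo.qstar θ - Mo.qBM E.θu) * E.Pl (Mo.qBM E.θu) := by
        refine Pint_le E.qbar_pos.le E.Pl_cont E.Pl_anti.antitoneOn hv0mem
          (qstar_mem Mo hθΘ) ?_
        rw [hqstarθ]
        exact hqBMgt.le
      -- θu cannot be a minimizer
      have hmono := hθm.2.1 θ hθΘ
      rw [h] at hmono
      unfold Env.Wl at hmono
      rw [intervalIntegral.integral_same, hqstaru] at hmono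
      have hkey : (Mo.qstar θ - Mo.qBM E.θu) * (E.θu - δ - θ) < 0 := by
        apply mul_neg_of_pos_of_neg
        · rw [hqstarθ]; linarith
        · linarith
      have hPlv : E.Pl (Mo.qBM E.θu) = E.θu - δ := by simp only [hδ]; ring
      rw [hPlv] at hVb
      nlinarith

/-! ### Right-continuity of `q^BM` and of `W̲(·, q*)` -/

theorem qBM_tendsto_right {E : Env} (Mo : Model E) {θm : ℝ} (hθmΘ : θm ∈ E.Θ)
    (hlt : θm < E.θu) :
    Filter.Tendsto Mo.qBM (nhdsWithin θm (Ioi θm)) (nhds (Mo.qBM θm)) := by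
  have hev : Ioo θm E.θu ∈ nhdsWithin θm (Ioi θm) :=
    Ioo_mem_nhdsGT_of_mem ⟨le_rfl, hlt⟩
  have hzt : Filter.Tendsto Mo.zstar (nhdsWithin θm (Ioi θm)) (nhds (Mo.zstar θm)) := by
    rw [← nhdsWithin_Ioo_eq_nhdsGT hlt]
    refine ((zstar_contOn Mo) θm hθmΘ).tendsto.mono_left (nhdsWithin_mono _ ?_)
    intro x hx
    exact ⟨le_trans hθmΘ.1 hx.1.le, hx.2.le⟩
  rw [tendsto_order]
  constructor
  · -- values eventually above any a < qBM θm
    intro a ha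
    rcases lt_or_ge a 0 with ha0 | ha0
    · filter_upwards [hev] with θ hθ
      have hθΘ : θ ∈ E.Θ := ⟨le_trans hθmΘ.1 hθ.1.le, hθ.2.le⟩
      exact lt_of_lt_of_le ha0 (qBM_mem Mo hθΘ).1
    · -- 0 ≤ a < qBM θm
      have hamem : a ∈ Icc (0:ℝ) E.qbar := ⟨ha0, le_trans ha.le (qBM_mem Mo hθmΘ).2⟩
      have hz_u : Mo.zstar θm ≤ Mo.Pstar 0 := by
        by_contra hcon
        push_neg at hcon
        have h0 : Mo.qBM θm = 0 := by
          unfold Model.qBM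
          exact Mo.Dstar_high _ hcon
        rw [h0] at ha
        linarith
      have hPa : Mo.zstar θm < Mo.Pstar a := by
        have := Mo.Pstar_anti hamem (qBM_mem Mo hθmΘ) ha
        rwa [qBM_inv Mo hθmΘ hz_u] at this
      have hevz : ∀ᶠ θ in nhdsWithin θm (Ioi θm), Mo.zstar θ < Mo.Pstar a :=
        hzt (Iio_mem_nhds hPa)
      filter_upwards [hev, hevz] with θ hθ hzθ
      have hθΘ : θ ∈ E.Θ := ⟨le_trans hθmΘ.1 hθ.1.le, hθ.2.le⟩
      have hzle : Mo.zstar θ ≤ Mo.Pstar 0 := by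
        refine le_trans hzθ.le ?_
        exact Mo.Pstar_anti.antitoneOn ⟨le_rfl, E.qbar_pos.le⟩ hamem hamem.1
      by_contra hcon
      push_neg at hcon
      have := Mo.Pstar_anti.antitoneOn (qBM_mem Mo hθΘ) hamem hcon
      rw [qBM_inv Mo hθΘ hzle] at this
      linarith
  · -- values eventually below any b > qBM θm
    intro b hb
    filter_upwards [hev] with θ hθ
    have hθΘ : θ ∈ E.Θ := ⟨le_trans hθmΘ.1 hθ.1.le, hθ.2.le⟩
    exact lt_of_le_of_lt (qBM_anti Mo hθmΘ hθΘ hθ.1.le) hb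

theorem Wl_qstar_tendsto_right {E : Env} (Mo : Model E) {θm : ℝ} (hθmΘ : θm ∈ E.Θ)
    (hlt : θm < E.θu) :
    Filter.Tendsto (E.Wl Mo.qstar) (nhdsWithin θm (Ioi θm))
      (nhds (E.Wl Mo.qstar θm)) := by
  have hev : Ioo θm E.θu ∈ nhdsWithin θm (Ioi θm) :=
    Ioo_mem_nhdsGT_of_mem ⟨le_rfl, hlt⟩
  have hqs : Filter.Tendsto Mo.qstar (nhdsWithin θm (Ioi θm)) (nhds (Mo.qstar θm)) :=
    (qBM_tendsto_right Mo hθmΘ hlt).max tendsto_const_nhds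
  have hid : Filter.Tendsto (fun θ : ℝ => θ) (nhdsWithin θm (Ioi θm)) (nhds θm) :=
    Filter.Tendsto.mono_left Filter.tendsto_id nhdsWithin_le_nhds
  -- V̲ ∘ q*
  have hVt : Filter.Tendsto (fun θ => E.Vl (Mo.qstar θ)) (nhdsWithin θm (Ioi θm))
      (nhds (E.Vl (Mo.qstar θm))) := by
    have hcw : ContinuousWithinAt E.Vl (Icc 0 E.qbar) (Mo.qstar θm) :=
      (VcontOn E.qbar_pos.le E.Pl_cont) _ (qstar_mem Mo hθmΘ)
    refine hcw.tendsto.comp ?_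
    refine tendsto_nhdsWithin_of_tendsto_nhds_of_eventually_within _ hqs ?_
    filter_upwards [hev] with θ hθ
    exact qstar_mem Mo ⟨le_trans hθmΘ.1 hθ.1.le, hθ.2.le⟩
  -- the integral term
  have hKt : Filter.Tendsto (fun θ => ∫ y in θ..E.θu, Mo.qstar y)
      (nhdsWithin θm (Ioi θm)) (nhds (∫ y in θm..E.θu, Mo.qstar y)) := by
    have hd : Filter.Tendsto
        (fun θ => (∫ y in θ..E.θu, Mo.qstar y) - ∫ y in θm..E.θu, Mo.qstar y)
        (nhdsWithin θm (Ioi θm)) (nhds 0) := by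
      refine squeeze_zero_norm' (a := fun θ => (θ - θm) * E.qbar) ?_ ?_
      · filter_upwards [hev] with θ hθ
        have hθΘ : θ ∈ E.Θ := ⟨le_trans hθmΘ.1 hθ.1.le, hθ.2.le⟩
        have hsplit : (∫ y in θm..θ, Mo.qstar y) + (∫ y in θ..E.θu, Mo.qstar y)
            = ∫ y in θm..E.θu, Mo.qstar y :=
          intervalIntegral.integral_add_adjacent_intervals
            (sched_int (qstar_sched Mo) hθmΘ hθΘ)
            (sched_int (qstar_sched Mo) hθΘ (thu_mem E))
        have hb1 : (∫ y in θm..θ, Mo.qstar y) ≤ (θ - θm) * E.qbar := by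
          have := intervalIntegral.integral_mono_on hθ.1.le
            (sched_int (qstar_sched Mo) hθmΘ hθΘ) intervalIntegrable_const
            (fun u hu => (qstar_mem Mo ⟨le_trans hθmΘ.1 hu.1, le_trans hu.2 hθΘ.2⟩).2)
          simpa [smul_eq_mul, mul_comm] using this
        have hb2 : 0 ≤ ∫ y in θm..θ, Mo.qstar y :=
          intervalIntegral.integral_nonneg hθ.1.le
            (fun u hu => (qstar_mem Mo ⟨le_trans hθmΘ.1 hu.1, le_trans hu.2 hθΘ.2⟩).1)
        rw [Real.norm_eq_abs, abs_sub_comm, abs_of_nonneg (by linarith)]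
        show (∫ y in θm..E.θu, Mo.qstar y) - (∫ y in θ..E.θu, Mo.qstar y) ≤ (θ - θm) * E.qbar
        linarith
      · have : Filter.Tendsto (fun θ => (θ - θm) * E.qbar)
            (nhdsWithin θm (Ioi θm)) (nhds ((θm - θm) * E.qbar)) :=
          ((hid.sub_const θm).mul_const E.qbar)
        simpa using this
    have := hd.add_const (∫ y in θm..E.θu, Mo.qstar y)
    simpa using this
  have hfin := (hVt.sub (hid.mul hqs)).sub hKt
  exact hfin

/-! ### Part C : strict downward adjustment on a positive measure subset -/

set_option maxHeartbeats 1000000 in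
theorem partC {E : Env} (Mo : Model E)
    (hviol : ∃ θ ∈ E.Θ, E.Wl Mo.qstar θ < E.Gstar)
    {θs θm : ℝ} (hθs : Mo.IsThetaStar θs) (hθm : Mo.IsThetaM θm)
    {q : ℝ → ℝ} (hOPT : Mo.SolvesROPT q) :
    0 < volume {θ | θ ∈ Ico θm θs ∧ q θ < Mo.qBM θ} := by
  have hms := thetaM_lt Mo hviol hθs hθm
  obtain ⟨θv, hθvΘ, hθv⟩ := hviol
  have hθmΘ := hθm.1
  have hθsΘ := thetaStar_mem hθs
  have hmin : E.Wl Mo.qstar θm < E.Gstar := lt_of_le_of_lt (hθm.2.1 θv hθvΘ) hθv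
  by_contra hcon
  push_neg at hcon
  have hN1 : volume {θ | θ ∈ Ico θm θs ∧ q θ < Mo.qBM θ} = 0 :=
    le_antisymm hcon (zero_le)
  have hN2 := partA Mo hθs hOPT
  have hbad : volume ({θ | θ ∈ Ico θm θs ∧ q θ < Mo.qBM θ}
      ∪ ({θ | θ ∈ Ioo E.θl θs ∧ Mo.qBM θ < q θ} ∪ {θs})) = 0 := by
    refine measure_union_null hN1 (measure_union_null hN2 ?_)
    exact Real.volume_singleton
  -- a small interval right of θm where the q*-constraint is violated
  have hθmu : θm < E.θu := lt_of_lt_of_le hms hθsΘ.2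
  have htend := Wl_qstar_tendsto_right Mo hθmΘ hθmu
  have hev1 : ∀ᶠ θ in nhdsWithin θm (Ioi θm), E.Wl Mo.qstar θ < E.Gstar :=
    htend (Iio_mem_nhds hmin)
  have hev2 : Ioo θm θs ∈ nhdsWithin θm (Ioi θm) :=
    Ioo_mem_nhdsGT_of_mem ⟨le_rfl, hms⟩
  obtain ⟨u, hu, hsub⟩ :=
    mem_nhdsGT_iff_exists_Ioo_subset.mp (Filter.inter_mem hev1 hev2)
  have hpos : 0 < volume (Ioo θm u) := by
    rw [Real.volume_Ioo]
    simp only [ENNReal.ofReal_pos]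
    simpa using hu
  obtain ⟨θ1, hθ1Ioo, hθ1good⟩ : ∃ θ1, θ1 ∈ Ioo θm u ∧ θ1 ∉
      ({θ | θ ∈ Ico θm θs ∧ q θ < Mo.qBM θ}
        ∪ ({θ | θ ∈ Ioo E.θl θs ∧ Mo.qBM θ < q θ} ∪ {θs})) := by
    by_contra hc
    push_neg at hc
    exact absurd (measure_mono_null (fun x hx => hc x hx) hbad) (ne_of_gt hpos)
  obtain ⟨hWneg, hθ1mem2⟩ := hsub hθ1Ioo
  have hθ1Θ : θ1 ∈ E.Θ := ⟨le_trans hθmΘ.1 hθ1mem2.1.le, le_trans hθ1mem2.2.le hθsΘ.2⟩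
  have hθ1l : E.θl < θ1 := lt_of_le_of_lt hθmΘ.1 hθ1mem2.1
  have h_ge : Mo.qBM θ1 ≤ q θ1 := by
    by_contra hlt2
    push_neg at hlt2
    exact hθ1good (Or.inl ⟨⟨hθ1mem2.1.le, hθ1mem2.2⟩, hlt2⟩)
  have h_le : q θ1 ≤ Mo.qBM θ1 := partB Mo hθs hOPT θ1 ⟨hθ1l, hθ1mem2.2⟩
  have heq1 : q θ1 = Mo.qBM θ1 := le_antisymm h_le h_ge
  -- compare the integral terms
  have hKcomp : (∫ y in θ1..E.θu, Mo.qstar y) ≤ ∫ y in θ1..E.θu, q y := by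
    refine intervalIntegral.integral_mono_ae_restrict hθ1Θ.2
      (sched_int (qstar_sched Mo) hθ1Θ (thu_mem E))
      (sched_int hOPT.1.1 hθ1Θ (thu_mem E)) ?_
    rw [Filter.EventuallyLE, ae_restrict_iff' measurableSet_Icc]
    rw [ae_iff]
    refine measure_mono_null ?_ hbad
    intro x hx
    simp only [mem_setOf_eq, not_forall] at hx
    obtain ⟨hxI, hxlt⟩ := hx
    push_neg at hxlt
    have hxΘ : x ∈ E.Θ := ⟨le_trans hθ1Θ.1 hxI.1, hxI.2⟩
    rcases lt_trichotomy x θs with hx1 | hx1 | hx1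
    · -- x < θs : then q x < q* x = qBM x
      have hxq : Mo.qstar x = Mo.qBM x := qstar_eq_qBM Mo hθs hxΘ hx1.le
      left
      refine ⟨⟨le_trans hθ1mem2.1.le hxI.1, hx1⟩, ?_⟩
      rw [← hxq]
      exact hxlt
    · right; right; simp [hx1]
    · -- x > θs : impossible since then q* x = ql ≤ q x
      exfalso
      rcases hθs with h1 | h2
      · have : Mo.qstar x = E.ql := qstar_eq_ql_case1 h1 hxΘ hx1.le
        rw [this] at hxlt
        exact absurd (feas_ge hOPT.1 hxΘ) (not_le.mpr hxlt)
      · obtain ⟨_, rfl⟩ := h2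
        exact absurd hxΘ.2 (not_le.mpr hx1)
  -- final contradiction with the constraint of q at θ1
  have hconstr := hOPT.1.2 θ1 hθ1Θ
  have hq1 : Mo.qstar θ1 = Mo.qBM θ1 := qstar_eq_qBM Mo hθs hθ1Θ hθ1mem2.2.le
  have hWneg' : E.Vl (Mo.qstar θ1) - θ1 * Mo.qstar θ1
      - (∫ y in θ1..E.θu, Mo.qstar y) < E.Gstar := hWneg
  rw [hq1] at hWneg'
  unfold Env.Wl at hconstr
  rw [heq1] at hconstr
  linarith
end RobustAux
end Aux
/-- Proposition 2(b): if the Baron–Myerson-with-quantity-floor mechanism is not robustly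
optimal, every solution of (ROPT) lies weakly below `q^BM` on `(θl, θ*)`, strictly so
on a subset of `[θ^m, θ*)` of positive Lebesgue measure. -/
theorem ROPT_downward_adjustment (E : Env) (Mo : Model E)
    (hviol : ∃ θ ∈ E.Θ, E.Wl Mo.qstar θ < E.Gstar)
    (θs θm : ℝ) (hθs : Mo.IsThetaStar θs) (hθm : Mo.IsThetaM θm)
    (qOPT : ℝ → ℝ) (hOPT : Mo.SolvesROPT qOPT) :
    (∀ θ ∈ Ioo E.θl θs, qOPT θ ≤ Mo.qBM θ) ∧
      0 < volume {θ ∈ Ico θm θs | qOPT θ < Mo.qBM θ} :=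
  ⟨RobustAux.partB Mo hθs hOPT, RobustAux.partC Mo hviol hθs hθm hOPT⟩
end
end
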